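/- arXiv:1503.04021 — 14 statements merged into one kernel-verified Lean document; each statement's English description precedes it below -/
import Mathlib

section
/- Let S : ℝ^{D−d} × ℝ^d → ℝ be a bilinear map, let h ∈ ℝ, and let a_{ij}, b_i, A_{ij}, B_i (i, j = 1,…,s) be real coefficients satisfying b_i = B_i for all i and b_i A_{ij} + B_j a_{ji} − b_i B_j = 0 for all i, j. Let q, q⁺, Q_1,…,Q_s, k_1,…,k_s ∈ ℝ^{D−d} and p, p⁺, P_1,…,P_s, ℓ_1,…,ℓ_s ∈ ℝ^d be arbitrary vectors satisfying q⁺ = q + h Σ_{i=1}^s b_i k_i, p⁺ = p + h Σ_{i=1}^s B_i ℓ_i, Q_i = q + h Σ_{j=1}^s a_{ij} k_j and P_i = p + h Σ_{j=1}^s A_{ij} ℓ_j. Then S(q⁺, p⁺) − S(q, p) = h Σ_{i=1}^s b_i ( S(k_i, P_i) + S(Q_i, ℓ_i) ). -/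
open Matrix BigOperators

/-- Lemma 2.6 (key algebraic identity for symplectic PRK schemes). -/
theorem stmt_0 (dq dp s : ℕ)
    (S : (Fin dq → ℝ) →ₗ[ℝ] (Fin dp → ℝ) →ₗ[ℝ] ℝ)
    (h : ℝ) (a A : Fin s → Fin s → ℝ) (b B : Fin s → ℝ)
    (hbB : ∀ i, b i = B i)
    (hsymp : ∀ i j, b i * A i j + B j * a j i - b i * B j = 0)
    (q qp : Fin dq → ℝ) (Q k : Fin s → Fin dq → ℝ)
    (p pp : Fin dp → ℝ) (P l : Fin s → Fin dp → ℝ)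
    (hq : qp = q + h • ∑ i, b i • k i)
    (hp : pp = p + h • ∑ i, B i • l i)
    (hQ : ∀ i, Q i = q + h • ∑ j, a i j • k j)
    (hP : ∀ i, P i = p + h • ∑ j, A i j • l j) :
    S qp pp - S q p = h * ∑ i, b i * (S (k i) (P i) + S (Q i) (l i)) := by
  subst hq hp
  have key : ∀ i j, B i * A i j + B j * a j i = B i * B j := fun i j => by
    have := hsymp i j; simp only [hbB] at this; linarith
  simp only [hQ, hP, map_add, _root_.map_smul, _root_.map_sum, LinearMap.add_apply,
    LinearMap.smul_apply, LinearMap.sum_apply, smul_eq_mul,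
    Finset.mul_sum, Finset.sum_add_distrib, mul_add, hbB]
  have hd : ∑ x : Fin s, ∑ i : Fin s, h * (B x * (h * (B i * (S (k i)) (l x)))) =
      (∑ x : Fin s, ∑ i : Fin s, h * (B x * (h * (A x i * (S (k x)) (l i))))) +
      ∑ x : Fin s, ∑ i : Fin s, h * (B x * (h * (a x i * (S (k i)) (l x)))) := by
    rw [Finset.sum_comm (f := fun x i => h * (B x * (h * (A x i * (S (k x)) (l i)))))]
    rw [← Finset.sum_add_distrib]
    refine Finset.sum_congr rfl fun x _ => ?_
    rw [← Finset.sum_add_distrib]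
    refine Finset.sum_congr rfl fun i _ => ?_
    linear_combination -h * h * (S (k i)) (l x) * key i x
  rw [hd]; ring
end

section
/- Let F : ℝ^D × ℝ → ℝ^D and let I : ℝ^D × ℝ^D → ℝ be a bilinear map such that I(F(y,t), y) + I(y, F(y,t)) = 0 for all y ∈ ℝ^D and t ∈ ℝ. Assume the RK coefficients satisfy b_i a_{ij} + b_j a_{ji} − b_i b_j = 0 for all i, j = 1,…,s. Let t_0 < t_1 < … < t_N with h_n = t_{n+1} − t_n, and suppose the vectors y_0,…,y_N ∈ ℝ^D, together with stages Y_{n,i} ∈ ℝ^D and slopes K_{n,i} ∈ ℝ^D, satisfy y_{n+1} = y_n + h_n Σ_{i=1}^s b_i K_{n,i}, K_{n,i} = F(Y_{n,i}, t_n + c_i h_n), and Y_{n,i} = y_n + h_n Σ_{j=1}^s a_{ij} K_{n,j} for all n = 0,…,N−1 and i = 1,…,s. Then I(y_n, y_n) = I(y_0, y_0) for every n = 0,…,N. -/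
open Matrix BigOperators

/-- Cooper's theorem (Theorem 2.2): a symplectic RK scheme exactly conserves every
quadratic (bilinear) first integral of the system being integrated. -/
theorem stmt_1 (D s N : ℕ)
    (F : (Fin D → ℝ) → ℝ → (Fin D → ℝ))
    (I : (Fin D → ℝ) →ₗ[ℝ] (Fin D → ℝ) →ₗ[ℝ] ℝ)
    (hI : ∀ y t, I (F y t) y + I y (F y t) = 0)
    (a : Fin s → Fin s → ℝ) (b c : Fin s → ℝ)
    (hsymp : ∀ i j, b i * a i j + b j * a j i - b i * b j = 0)
    (t : Fin (N + 1) → ℝ) (ht : StrictMono t)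
    (y : Fin (N + 1) → Fin D → ℝ)
    (Y K : Fin N → Fin s → Fin D → ℝ)
    (hstep : ∀ n : Fin N,
      y n.succ = y n.castSucc + (t n.succ - t n.castSucc) • ∑ i, b i • K n i)
    (hK : ∀ (n : Fin N) (i : Fin s),
      K n i = F (Y n i) (t n.castSucc + c i * (t n.succ - t n.castSucc)))
    (hY : ∀ (n : Fin N) (i : Fin s),
      Y n i = y n.castSucc + (t n.succ - t n.castSucc) • ∑ j, a i j • K n j) :
    ∀ n, I (y n) (y n) = I (y 0) (y 0) := by
  have key : ∀ n : Fin N, I (y n.succ) (y n.succ) = I (y n.castSucc) (y n.castSucc) := by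
    intro n
    set h := t n.succ - t n.castSucc with hh
    set yn := y n.castSucc with hyn
    have expL : ∀ (w : Fin s → ℝ) (v : Fin D → ℝ),
        I (∑ i, w i • K n i) v = ∑ i, w i * I (K n i) v := by
      intro w v
      rw [map_sum, LinearMap.sum_apply]
      exact Finset.sum_congr rfl fun i _ => by
        rw [LinearMap.map_smul, LinearMap.smul_apply, smul_eq_mul]
    have expR : ∀ (w : Fin s → ℝ) (v : Fin D → ℝ),
        I v (∑ i, w i • K n i) = ∑ i, w i * I v (K n i) := by
      intro w v
      rw [map_sum]
      exact Finset.sum_congr rfl fun i _ => by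
        rw [LinearMap.map_smul, smul_eq_mul]
    have hperp : ∀ i, I (K n i) yn + I yn (K n i)
        = -(h * ∑ j, a i j * (I (K n i) (K n j) + I (K n j) (K n i))) := by
      intro i
      have h0 : I (K n i) (Y n i) + I (Y n i) (K n i) = 0 := by
        conv_lhs => rw [hK]
        exact hI _ _
      rw [hY n i, ← hh, ← hyn] at h0
      simp only [map_add, LinearMap.add_apply, LinearMap.map_smul, LinearMap.smul_apply,
        smul_eq_mul, expL, expR] at h0
      have e3 : ∑ j, a i j * (I (K n i) (K n j) + I (K n j) (K n i))
          = (∑ j, a i j * I (K n i) (K n j)) + ∑ j, a i j * I (K n j) (K n i) := by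
        rw [← Finset.sum_add_distrib]
        exact Finset.sum_congr rfl fun j _ => by ring
      rw [e3]
      linarith
    set S := ∑ i, b i • K n i with hS
    have base : I (y n.succ) (y n.succ)
        = I yn yn + h * I S yn + h * I yn S + h * (h * I S S) := by
      rw [hstep n, ← hh, ← hyn, ← hS]
      simp only [map_add, LinearMap.add_apply, LinearMap.map_smul, LinearMap.smul_apply,
        smul_eq_mul]
      ring
    have hSS : I S S = ∑ i, ∑ j, b i * b j * I (K n i) (K n j) := by
      rw [hS, expL]
      exact Finset.sum_congr rfl fun i _ => by
        rw [expR, Finset.mul_sum]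
        exact Finset.sum_congr rfl fun j _ => by ring
    have hSy : I S yn = ∑ i, b i * I (K n i) yn := by rw [hS, expL]
    have hyS : I yn S = ∑ i, b i * I yn (K n i) := by rw [hS, expR]
    rw [base, hSS, hSy, hyS]
    have comb : h * (∑ i, b i * I (K n i) yn) + h * (∑ i, b i * I yn (K n i))
        = -(h * (h * ∑ i, ∑ j, b i * (a i j * (I (K n i) (K n j) + I (K n j) (K n i))))) := by
      rw [← mul_add, ← Finset.sum_add_distrib]
      have step1 : (∑ i, (b i * I (K n i) yn + b i * I yn (K n i)))
          = ∑ i, (-(h * ∑ j, b i * (a i j * (I (K n i) (K n j) + I (K n j) (K n i))))) := by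
        refine Finset.sum_congr rfl fun i _ => ?_
        rw [← mul_add, hperp i, ← Finset.mul_sum]
        ring
      rw [step1]
      rw [Finset.sum_neg_distrib, ← Finset.mul_sum]
      ring
    have final : ∑ i, ∑ j, b i * (a i j * (I (K n i) (K n j) + I (K n j) (K n i)))
        = ∑ i, ∑ j, b i * b j * I (K n i) (K n j) := by
      have split : ∑ i, ∑ j, b i * (a i j * (I (K n i) (K n j) + I (K n j) (K n i)))
          = (∑ i, ∑ j, b i * a i j * I (K n i) (K n j))
            + ∑ i, ∑ j, b i * a i j * I (K n j) (K n i) := by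
        rw [← Finset.sum_add_distrib]
        refine Finset.sum_congr rfl fun i _ => ?_
        rw [← Finset.sum_add_distrib]
        exact Finset.sum_congr rfl fun j _ => by ring
      rw [split, Finset.sum_comm (f := fun i j => b i * a i j * I (K n j) (K n i)),
        ← Finset.sum_add_distrib]
      refine Finset.sum_congr rfl fun i _ => ?_
      rw [← Finset.sum_add_distrib]
      refine Finset.sum_congr rfl fun j _ => ?_
      linear_combination (I (K n i) (K n j)) * hsymp i j
    calc I yn yn + h * (∑ i, b i * I (K n i) yn) + h * (∑ i, b i * I yn (K n i))
          + h * (h * ∑ i, ∑ j, b i * b j * I (K n i) (K n j))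
        = I yn yn + (h * (∑ i, b i * I (K n i) yn) + h * (∑ i, b i * I yn (K n i)))
          + h * (h * ∑ i, ∑ j, b i * b j * I (K n i) (K n j)) := by ring
      _ = I yn yn := by rw [comb, final]; ring
  intro n
  induction n using Fin.induction with
  | zero => rfl
  | succ i ih => rw [key i, ih]
end

section
/- Let f : ℝ^{D−d} × ℝ^d × ℝ → ℝ^{D−d} and g : ℝ^{D−d} × ℝ^d × ℝ → ℝ^d, and let S : ℝ^{D−d} × ℝ^d → ℝ be a bilinear map such that S(f(q,p,t), p) + S(q, g(q,p,t)) = 0 for all q ∈ ℝ^{D−d}, p ∈ ℝ^d, t ∈ ℝ. Assume the PRK coefficients satisfy b_i = B_i for all i, b_i A_{ij} + B_j a_{ji} − b_i B_j = 0 for all i, j, and c_i = C_i for all i. Let t_0 < t_1 < … < t_N with h_n = t_{n+1} − t_n, and suppose q_0,…,q_N ∈ ℝ^{D−d}, p_0,…,p_N ∈ ℝ^d, stages Q_{n,i}, P_{n,i} and slopes k_{n,i} = f(Q_{n,i}, P_{n,i}, t_n + c_i h_n), ℓ_{n,i} = g(Q_{n,i}, P_{n,i}, t_n + C_i h_n)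 satisfy q_{n+1} = q_n + h_n Σ_{i=1}^s b_i k_{n,i}, p_{n+1} = p_n + h_n Σ_{i=1}^s B_i ℓ_{n,i}, Q_{n,i} = q_n + h_n Σ_{j=1}^s a_{ij} k_{n,j}, P_{n,i} = p_n + h_n Σ_{j=1}^s A_{ij} ℓ_{n,j}. Then S(q_n, p_n) = S(q_0, p_0) for every n = 0,…,N. -/
/-!
Expanding `S(q_{n+1}, p_{n+1})` bilinearly and eliminating `p_n`, `q_n` through the stage
equations, the symplecticity condition `b_i A_ij + b_j a_ji = b_i b_j` cancels every term in
`S(k_i, ℓ_j)`, leaving `S(q_{n+1}, p_{n+1}) = S(q_n, p_n) + h_n Σ_i b_i (S(k_i, P_i) + S(Q_i, ℓ_i))`.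
Each summand is the invariance identity evaluated at the stage values, hence zero.
-/

open Finset

section

variable {R M N ι : Type*} [CommRing R] [AddCommGroup M] [Module R M] [AddCommGroup N] [Module R N]
  [Fintype ι] (S : M →ₗ[R] N →ₗ[R] R) (b : ι → R) (h : R) (k : ι → M) (l : ι → N)

theorem sum_mul_apply_add_smul_sum_right (A : ι → ι → R) (p : N) :
    ∑ i, b i * S (k i) (p + h • ∑ j, A i j • l j)
      = S (∑ i, b i • k i) p + h * ∑ i, ∑ j, b i * A i j * S (k i) (l j) := by
  simp only [map_add, map_smul, map_sum, LinearMap.sum_apply, LinearMap.smul_apply, smul_eq_mul,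
    mul_add, sum_add_distrib, mul_sum]
  congr 1
  exact sum_congr rfl fun i _ => sum_congr rfl fun j _ => by ring

theorem sum_mul_apply_add_smul_sum_left (a : ι → ι → R) (q : M) :
    ∑ j, b j * S (q + h • ∑ i, a j i • k i) (l j)
      = S q (∑ j, b j • l j) + h * ∑ i, ∑ j, b j * a j i * S (k i) (l j) := by
  simp only [map_add, map_smul, map_sum, LinearMap.add_apply, LinearMap.sum_apply,
    LinearMap.smul_apply, smul_eq_mul, mul_add, sum_add_distrib, mul_sum]
  rw [sum_comm (s := univ) (t := univ) (f := fun i j => h * (b j * a j i * S (k i) (l j)))]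
  congr 1
  exact sum_congr rfl fun i _ => sum_congr rfl fun j _ => by ring

theorem apply_sum_smul_sum_smul :
    S (∑ i, b i • k i) (∑ j, b j • l j) = ∑ i, ∑ j, b i * b j * S (k i) (l j) := by
  simp only [map_sum, map_smul, LinearMap.sum_apply, LinearMap.smul_apply, smul_eq_mul, mul_sum]
  rw [sum_comm]
  exact sum_congr rfl fun i _ => sum_congr rfl fun j _ => by ring

theorem apply_prk_step (a A : ι → ι → R) (hsymp : ∀ i j, b i * A i j + b j * a j i - b i * b j = 0)
    (q : M) (p : N) (Q : ι → M) (P : ι → N)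
    (hQ : ∀ i, Q i = q + h • ∑ j, a i j • k j) (hP : ∀ i, P i = p + h • ∑ j, A i j • l j) :
    S (q + h • ∑ i, b i • k i) (p + h • ∑ i, b i • l i)
      = S q p + h * ∑ i, b i * (S (k i) (P i) + S (Q i) (l i)) := by
  simp only [hQ, hP, mul_add, sum_add_distrib, sum_mul_apply_add_smul_sum_right,
    sum_mul_apply_add_smul_sum_left]
  have hbb : ∑ i, ∑ j, b i * b j * S (k i) (l j)
      = ∑ i, ∑ j, b i * A i j * S (k i) (l j) + ∑ i, ∑ j, b j * a j i * S (k i) (l j) := by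
    simp only [← sum_add_distrib]
    exact sum_congr rfl fun i _ => sum_congr rfl fun j _ => by
      linear_combination (-S (k i) (l j)) * hsymp i j
  have hexpand : S (q + h • ∑ i, b i • k i) (p + h • ∑ i, b i • l i)
      = S q p + h * S (∑ i, b i • k i) p + h * S q (∑ i, b i • l i)
        + h * h * S (∑ i, b i • k i) (∑ i, b i • l i) := by
    simp only [map_add, map_smul, LinearMap.add_apply, LinearMap.smul_apply, smul_eq_mul]
    ring
  rw [hexpand, apply_sum_smul_sum_smul, hbb]
  ring

end

theorem stmt_2_general (D d s N : ℕ)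
    (f : (Fin (D - d) → ℝ) → (Fin d → ℝ) → ℝ → (Fin (D - d) → ℝ))
    (g : (Fin (D - d) → ℝ) → (Fin d → ℝ) → ℝ → (Fin d → ℝ))
    (S : (Fin (D - d) → ℝ) →ₗ[ℝ] (Fin d → ℝ) →ₗ[ℝ] ℝ)
    (hS : ∀ q p t, S (f q p t) p + S q (g q p t) = 0)
    (a A : Fin s → Fin s → ℝ) (b B c C : Fin s → ℝ)
    (hbB : ∀ i, b i = B i)
    (hsymp : ∀ i j, b i * A i j + B j * a j i - b i * B j = 0)
    (hcC : ∀ i, c i = C i)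
    (t : Fin (N + 1) → ℝ)
    (q : Fin (N + 1) → Fin (D - d) → ℝ) (p : Fin (N + 1) → Fin d → ℝ)
    (Q k : Fin N → Fin s → Fin (D - d) → ℝ) (P l : Fin N → Fin s → Fin d → ℝ)
    (hk : ∀ (n : Fin N) (i : Fin s),
      k n i = f (Q n i) (P n i) (t n.castSucc + c i * (t n.succ - t n.castSucc)))
    (hl : ∀ (n : Fin N) (i : Fin s),
      l n i = g (Q n i) (P n i) (t n.castSucc + C i * (t n.succ - t n.castSucc)))
    (hqstep : ∀ n : Fin N,
      q n.succ = q n.castSucc + (t n.succ - t n.castSucc) • ∑ i, b i • k n i)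
    (hpstep : ∀ n : Fin N,
      p n.succ = p n.castSucc + (t n.succ - t n.castSucc) • ∑ i, B i • l n i)
    (hQ : ∀ (n : Fin N) (i : Fin s),
      Q n i = q n.castSucc + (t n.succ - t n.castSucc) • ∑ j, a i j • k n j)
    (hP : ∀ (n : Fin N) (i : Fin s),
      P n i = p n.castSucc + (t n.succ - t n.castSucc) • ∑ j, A i j • l n j) :
    ∀ n, S (q n) (p n) = S (q 0) (p 0) := by
  have hsymp_b : ∀ i j, b i * A i j + b j * a j i - b i * b j = 0 := fun i j => by
    simpa only [← hbB] using hsymp i j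
  have hstep (n : Fin N) : S (q n.succ) (p n.succ) = S (q n.castSucc) (p n.castSucc) := by
    have hinv (i : Fin s) : S (k n i) (P n i) + S (Q n i) (l n i) = 0 := by
      rw [hk, hl, hcC]
      exact hS _ _ _
    simp only [hqstep, hpstep, ← hbB]
    rw [apply_prk_step S b _ (k n) (l n) a A hsymp_b _ _ (Q n) (P n) (hQ n) (hP n)]
    simp [hinv]
  intro n
  induction n using Fin.induction with
  | zero => rfl
  | succ n ih => rw [hstep, ih]

/-- Theorem 2.4: a symplectic PRK scheme exactly conserves every bilinear invariant
`S(q, p)` of the partitioned system `dq/dt = f(q,p,t)`, `dp/dt = g(q,p,t)`. -/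
theorem stmt_2 (D d s N : ℕ)
    (f : (Fin (D - d) → ℝ) → (Fin d → ℝ) → ℝ → (Fin (D - d) → ℝ))
    (g : (Fin (D - d) → ℝ) → (Fin d → ℝ) → ℝ → (Fin d → ℝ))
    (S : (Fin (D - d) → ℝ) →ₗ[ℝ] (Fin d → ℝ) →ₗ[ℝ] ℝ)
    (hS : ∀ q p t, S (f q p t) p + S q (g q p t) = 0)
    (a A : Fin s → Fin s → ℝ) (b B c C : Fin s → ℝ)
    (hbB : ∀ i, b i = B i)
    (hsymp : ∀ i j, b i * A i j + B j * a j i - b i * B j = 0)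
    (hcC : ∀ i, c i = C i)
    (t : Fin (N + 1) → ℝ) (ht : StrictMono t)
    (q : Fin (N + 1) → Fin (D - d) → ℝ) (p : Fin (N + 1) → Fin d → ℝ)
    (Q k : Fin N → Fin s → Fin (D - d) → ℝ) (P l : Fin N → Fin s → Fin d → ℝ)
    (hk : ∀ (n : Fin N) (i : Fin s),
      k n i = f (Q n i) (P n i) (t n.castSucc + c i * (t n.succ - t n.castSucc)))
    (hl : ∀ (n : Fin N) (i : Fin s),
      l n i = g (Q n i) (P n i) (t n.castSucc + C i * (t n.succ - t n.castSucc)))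
    (hqstep : ∀ n : Fin N,
      q n.succ = q n.castSucc + (t n.succ - t n.castSucc) • ∑ i, b i • k n i)
    (hpstep : ∀ n : Fin N,
      p n.succ = p n.castSucc + (t n.succ - t n.castSucc) • ∑ i, B i • l n i)
    (hQ : ∀ (n : Fin N) (i : Fin s),
      Q n i = q n.castSucc + (t n.succ - t n.castSucc) • ∑ j, a i j • k n j)
    (hP : ∀ (n : Fin N) (i : Fin s),
      P n i = p n.castSucc + (t n.succ - t n.castSucc) • ∑ j, A i j • l n j) :
    ∀ n, S (q n) (p n) = S (q 0) (p 0) :=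
  stmt_2_general D d s N f g S hS a A b B c C hbB hsymp hcC t q p Q k P l hk hl hqstep hpstep hQ hP
end

section
/- Let d ≥ 1. Assume the PRK coefficients satisfy b_i = B_i for all i and b_i A_{ij} + B_j a_{ji} − b_i B_j = 0 for all i, j = 1,…,s. For each n = 0,…,N−1 and i = 1,…,s let E_{n,i} be a real d × d matrix and let P_{n,i} and R_{n,i} be symmetric real d × d matrices. Suppose (δq_n, δp_n) and (δq'_n, δp'_n), n = 0,…,N, are two discrete trajectories in ℝ^d × ℝ^d generated by the PRK scheme with step sizes h_n, coefficients (a_{ij}, b_i) for the first components and (A_{ij}, B_i) for the second components, and with slopes k_{n,i} = E_{n,i} Δq_{n,i} + P_{n,i} Δp_{n,i}, ℓ_{n,i} = −R_{n,i} Δq_{n,i} − E_{n,i}ᵀ Δp_{n,i} (the same matrices E_{n,i}, P_{n,i}, R_{n,i} being used for both trajectories): δq_{n+1} = δq_n + h_n Σ_i b_i k_{n,i}, δp_{n+1} = δp_n + h_n Σ_i B_i ℓ_{n,i}, Δq_{n,i} = δq_n + h_n Σ_j a_{ij} k_{n,j}, Δp_{n,i} = δp_n + h_n Σ_j A_{ij}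 ℓ_{n,j}, and similarly for the primed trajectory. Then the quantity δq_nᵀ δp'_n − δq'_nᵀ δp_n is independent of n = 0,…,N. -/
open Matrix BigOperators

section Aux

variable {d s : ℕ}

private lemma sumdot (f : Fin s → Fin d → ℝ) (v : Fin d → ℝ) :
    (∑ i, f i) ⬝ᵥ v = ∑ i, (f i ⬝ᵥ v) := by
  simp [dotProduct, Finset.sum_mul]
  rw [Finset.sum_comm]

private lemma dotsum (v : Fin d → ℝ) (f : Fin s → Fin d → ℝ) :
    v ⬝ᵥ (∑ i, f i) = ∑ i, (v ⬝ᵥ f i) := by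
  simp [dotProduct, Finset.mul_sum]
  rw [Finset.sum_comm]

private lemma mulVec_dot (M : Matrix (Fin d) (Fin d) ℝ) (x y : Fin d → ℝ) :
    (M.mulVec x) ⬝ᵥ y = x ⬝ᵥ (Mᵀ.mulVec y) := by
  rw [dotProduct_comm, dotProduct_mulVec, mulVec_transpose, dotProduct_comm]

private lemma symm_dot (M : Matrix (Fin d) (Fin d) ℝ) (hM : M.IsSymm) (x y : Fin d → ℝ) :
    x ⬝ᵥ M.mulVec y = y ⬝ᵥ M.mulVec x := by
  rw [dotProduct_mulVec, ← mulVec_transpose, hM.eq, dotProduct_comm]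

private lemma lin_dot (c : ℝ) (w : Fin s → ℝ) (u : Fin s → Fin d → ℝ) (e : Fin d → ℝ) :
    (c • ∑ j, w j • u j) ⬝ᵥ e = c * ∑ j, w j * (u j ⬝ᵥ e) := by
  rw [smul_dotProduct, sumdot]
  simp [smul_dotProduct]

private lemma dot_lin (e : Fin d → ℝ) (c : ℝ) (w : Fin s → ℝ) (u : Fin s → Fin d → ℝ) :
    e ⬝ᵥ (c • ∑ j, w j • u j) = c * ∑ j, w j * (e ⬝ᵥ u j) := by
  rw [dotProduct_smul, dotsum]
  simp [dotProduct_smul]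

private lemma expand (c : ℝ) (b B : Fin s → ℝ) (x y : Fin d → ℝ) (u v : Fin s → Fin d → ℝ) :
    (x + c • ∑ i, b i • u i) ⬝ᵥ (y + c • ∑ i, B i • v i)
      = x ⬝ᵥ y + c * (∑ i, B i * (x ⬝ᵥ v i)) + c * (∑ i, b i * (u i ⬝ᵥ y))
        + c * (c * ∑ i, ∑ j, b i * B j * (u i ⬝ᵥ v j)) := by
  have hT : ∀ w : Fin d → ℝ, w ⬝ᵥ (∑ i, B i • v i) = ∑ i, B i * (w ⬝ᵥ v i) := by
    intro w; rw [dotsum]; simp [dotProduct_smul]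
  have hS : ∀ w : Fin d → ℝ, (∑ i, b i • u i) ⬝ᵥ w = ∑ i, b i * (u i ⬝ᵥ w) := by
    intro w; rw [sumdot]; simp [smul_dotProduct]
  simp only [dotProduct_add, add_dotProduct, smul_dotProduct, dotProduct_smul,
    smul_eq_mul, hT, hS, Finset.mul_sum]
  ring_nf
  simp only [Finset.sum_add_distrib, Finset.mul_sum]
  rw [Finset.sum_comm]
  ring_nf
  congr 1
  exact Finset.sum_congr rfl fun i _ => Finset.sum_congr rfl fun j _ => by ring

private lemma side_step (c : ℝ) (a A : Fin s → Fin s → ℝ) (b B : Fin s → ℝ)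
    (hsymp : ∀ i j, b i * A i j + B j * a j i - b i * B j = 0)
    (q p : Fin d → ℝ) (kk ll Dq Dp : Fin s → Fin d → ℝ)
    (hDq : ∀ i, Dq i = q + c • ∑ j, a i j • kk j)
    (hDp : ∀ i, Dp i = p + c • ∑ j, A i j • ll j) :
    (q + c • ∑ i, b i • kk i) ⬝ᵥ (p + c • ∑ i, B i • ll i)
      = q ⬝ᵥ p + c * ∑ i, (B i * (Dq i ⬝ᵥ ll i) + b i * (kk i ⬝ᵥ Dp i)) := by
  have hA : ∀ i, q ⬝ᵥ ll i = Dq i ⬝ᵥ ll i - c * ∑ j, a i j * (kk j ⬝ᵥ ll i) := by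
    intro i; rw [hDq i, add_dotProduct, lin_dot]; ring
  have hB : ∀ i, kk i ⬝ᵥ p = kk i ⬝ᵥ Dp i - c * ∑ j, A i j * (kk i ⬝ᵥ ll j) := by
    intro i; rw [hDp i, dotProduct_add, dot_lin]; ring
  have s1 : ∑ i, B i * (q ⬝ᵥ ll i)
      = (∑ i, B i * (Dq i ⬝ᵥ ll i)) - c * ∑ i, ∑ j, B i * a i j * (kk j ⬝ᵥ ll i) := by
    rw [Finset.mul_sum, ← Finset.sum_sub_distrib]
    refine Finset.sum_congr rfl fun i _ => ?_
    rw [hA i, mul_sub]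
    congr 1
    simp only [Finset.mul_sum]
    exact Finset.sum_congr rfl fun j _ => by ring
  have s2 : ∑ i, b i * (kk i ⬝ᵥ p)
      = (∑ i, b i * (kk i ⬝ᵥ Dp i)) - c * ∑ i, ∑ j, b i * A i j * (kk i ⬝ᵥ ll j) := by
    rw [Finset.mul_sum, ← Finset.sum_sub_distrib]
    refine Finset.sum_congr rfl fun i _ => ?_
    rw [hB i, mul_sub]
    congr 1
    simp only [Finset.mul_sum]
    exact Finset.sum_congr rfl fun j _ => by ring
  have s3 : ∑ i, ∑ j, B i * a i j * (kk j ⬝ᵥ ll i)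
      = ∑ i, ∑ j, B j * a j i * (kk i ⬝ᵥ ll j) := Finset.sum_comm
  have s4 : (∑ i, ∑ j, b i * B j * (kk i ⬝ᵥ ll j))
        - (∑ i, ∑ j, B j * a j i * (kk i ⬝ᵥ ll j))
        - (∑ i, ∑ j, b i * A i j * (kk i ⬝ᵥ ll j)) = 0 := by
    simp only [← Finset.sum_sub_distrib]
    refine Finset.sum_eq_zero fun i _ => Finset.sum_eq_zero fun j _ => ?_
    linear_combination (-(kk i ⬝ᵥ ll j)) * hsymp i j
  rw [expand, s1, s2, s3]
  simp only [Finset.sum_add_distrib]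
  linear_combination (c * c) * s4

end Aux

/-- Theorem 2.8 (quadratic-invariant formulation of symplecticness of PRK maps):
a symplectic PRK scheme applied to the linearised Hamiltonian (variational) equations
preserves the canonical symplectic form `δqᵀ δp' − δq'ᵀ δp` for every pair of
discrete trajectories. -/
theorem stmt_4 (d s N : ℕ) (hd : 1 ≤ d)
    (a A : Fin s → Fin s → ℝ) (b B : Fin s → ℝ)
    (hbB : ∀ i, b i = B i)
    (hsymp : ∀ i j, b i * A i j + B j * a j i - b i * B j = 0)
    (h : Fin N → ℝ)
    (E P R : Fin N → Fin s → Matrix (Fin d) (Fin d) ℝ)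
    (hPsymm : ∀ (n : Fin N) (i : Fin s), (P n i).IsSymm)
    (hRsymm : ∀ (n : Fin N) (i : Fin s), (R n i).IsSymm)
    (δq δq' δp δp' : Fin (N + 1) → Fin d → ℝ)
    (k ell Δq Δp k' ell' Δq' Δp' : Fin N → Fin s → Fin d → ℝ)
    (hk : ∀ (n : Fin N) (i : Fin s),
      k n i = (E n i).mulVec (Δq n i) + (P n i).mulVec (Δp n i))
    (hell : ∀ (n : Fin N) (i : Fin s),
      ell n i = -((R n i).mulVec (Δq n i)) - (E n i)ᵀ.mulVec (Δp n i))
    (hqstep : ∀ n : Fin N, δq n.succ = δq n.castSucc + h n • ∑ i, b i • k n i)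
    (hpstep : ∀ n : Fin N, δp n.succ = δp n.castSucc + h n • ∑ i, B i • ell n i)
    (hΔq : ∀ (n : Fin N) (i : Fin s),
      Δq n i = δq n.castSucc + h n • ∑ j, a i j • k n j)
    (hΔp : ∀ (n : Fin N) (i : Fin s),
      Δp n i = δp n.castSucc + h n • ∑ j, A i j • ell n j)
    (hk' : ∀ (n : Fin N) (i : Fin s),
      k' n i = (E n i).mulVec (Δq' n i) + (P n i).mulVec (Δp' n i))
    (hell' : ∀ (n : Fin N) (i : Fin s),
      ell' n i = -((R n i).mulVec (Δq' n i)) - (E n i)ᵀ.mulVec (Δp' n i))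
    (hqstep' : ∀ n : Fin N, δq' n.succ = δq' n.castSucc + h n • ∑ i, b i • k' n i)
    (hpstep' : ∀ n : Fin N, δp' n.succ = δp' n.castSucc + h n • ∑ i, B i • ell' n i)
    (hΔq' : ∀ (n : Fin N) (i : Fin s),
      Δq' n i = δq' n.castSucc + h n • ∑ j, a i j • k' n j)
    (hΔp' : ∀ (n : Fin N) (i : Fin s),
      Δp' n i = δp' n.castSucc + h n • ∑ j, A i j • ell' n j) :
    ∀ n, δq n ⬝ᵥ δp' n - δq' n ⬝ᵥ δp n = δq 0 ⬝ᵥ δp' 0 - δq' 0 ⬝ᵥ δp 0 := by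
  intro n
  induction n using Fin.induction with
  | zero => rfl
  | succ m ih =>
    rw [← ih]
    have e1 : δq m.succ ⬝ᵥ δp' m.succ
        = δq m.castSucc ⬝ᵥ δp' m.castSucc
          + h m * ∑ i, (B i * (Δq m i ⬝ᵥ ell' m i) + b i * (k m i ⬝ᵥ Δp' m i)) := by
      rw [hqstep m, hpstep' m]
      exact side_step (h m) a A b B hsymp _ _ _ _ _ _ (hΔq m) (hΔp' m)
    have e2 : δq' m.succ ⬝ᵥ δp m.succ
        = δq' m.castSucc ⬝ᵥ δp m.castSucc
          + h m * ∑ i, (B i * (Δq' m i ⬝ᵥ ell m i) + b i * (k' m i ⬝ᵥ Δp m i)) := by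
      rw [hqstep' m, hpstep m]
      exact side_step (h m) a A b B hsymp _ _ _ _ _ _ (hΔq' m) (hΔp m)
    have key : ∀ i, Δq m i ⬝ᵥ ell' m i + k m i ⬝ᵥ Δp' m i
        = Δq' m i ⬝ᵥ ell m i + k' m i ⬝ᵥ Δp m i := by
      intro i
      rw [hk m i, hell m i, hk' m i, hell' m i]
      simp only [dotProduct_sub, dotProduct_neg, add_dotProduct, mulVec_dot]
      rw [symm_dot (R m i) (hRsymm m i) (Δq m i) (Δq' m i),
        symm_dot ((P m i)ᵀ) ((hPsymm m i).transpose) (Δp m i) (Δp' m i)]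
      ring
    have esum : ∑ i, (B i * (Δq m i ⬝ᵥ ell' m i) + b i * (k m i ⬝ᵥ Δp' m i))
        = ∑ i, (B i * (Δq' m i ⬝ᵥ ell m i) + b i * (k' m i ⬝ᵥ Δp m i)) := by
      refine Finset.sum_congr rfl fun i _ => ?_
      rw [← hbB i]
      linear_combination (b i) * key i
    rw [e1, e2, esum]
    ring
end

section
/- Let f : ℝ^d × ℝ → ℝ^d be differentiable in its first argument, fix real RK coefficients a_{ij}, b_i, c_i (i, j = 1,…,s), times t_0,…,t_N and step sizes h_n = t_{n+1} − t_n. Suppose that for each ε in a neighbourhood of 0 ∈ ℝ there are vectors x_n(ε), X_{n,i}(ε), k_{n,i}(ε) ∈ ℝ^d (n = 0,…,N, i = 1,…,s) satisfying the RK equations x_{n+1}(ε) = x_n(ε) + h_n Σ_{i=1}^s b_i k_{n,i}(ε), k_{n,i}(ε) = f(X_{n,i}(ε), t_n + c_i h_n), X_{n,i}(ε) = x_n(ε) + h_n Σ_{j=1}^s a_{ij} k_{n,j}(ε), and that the maps ε ↦ x_n(ε) and ε ↦ X_{n,i}(ε) are differentiable at ε = 0. Then the maps ε ↦ k_{n,i}(ε)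 are differentiable at ε = 0 and the derivatives δ_n = (d/dε)x_n(0), Δ_{n,i} = (d/dε)X_{n,i}(0), d_{n,i} = (d/dε)k_{n,i}(0) satisfy the RK discretisation of the variational equations: δ_{n+1} = δ_n + h_n Σ_{i=1}^s b_i d_{n,i}, d_{n,i} = ∂_x f(X_{n,i}(0), t_n + c_i h_n) Δ_{n,i}, and Δ_{n,i} = δ_n + h_n Σ_{j=1}^s a_{ij} d_{n,j}, where ∂_x f denotes the derivative (Jacobian) of f with respect to its first argument. -/
open Matrix BigOperators

/-! Differentiating each RK equation in `ε` at `0` gives the corresponding equation of the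
discretised variational system: the update and stage equations are affine in the slopes, so
their derivatives are the same affine combinations of the slope derivatives, and the slope
equation differentiates by the chain rule. Uniqueness of derivatives identifies the results
with `δ` and `Δ`. -/

section RungeKuttaCombination

variable {𝕜 ι E : Type*} [NontriviallyNormedField 𝕜] [NormedAddCommGroup E] [NormedSpace 𝕜 E]
  [Fintype ι] {x : 𝕜 → E} {k : ι → 𝕜 → E} {δ : E} {d : ι → E} {ε : 𝕜}

theorem HasDerivAt.add_smul_sum_smul (hx : HasDerivAt x δ ε)
    (hk : ∀ i, HasDerivAt (k i) (d i) ε) (h : 𝕜) (w : ι → 𝕜) :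
    HasDerivAt (fun ε => x ε + h • ∑ i, w i • k i ε) (δ + h • ∑ i, w i • d i) ε :=
  hx.add ((HasDerivAt.fun_sum fun i _ => (hk i).const_smul (w i)).const_smul h)

theorem HasDerivAt.eq_add_smul_sum_smul_of_eventuallyEq {y : 𝕜 → E} {δ' : E}
    (hy : HasDerivAt y δ' ε) (hx : HasDerivAt x δ ε) (hk : ∀ i, HasDerivAt (k i) (d i) ε)
    (h : 𝕜) (w : ι → 𝕜) (heq : ∀ᶠ ε' in nhds ε, y ε' = x ε' + h • ∑ i, w i • k i ε') :
    δ' = δ + h • ∑ i, w i • d i :=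
  hy.unique ((hx.add_smul_sum_smul hk h w).congr_of_eventuallyEq heq)

end RungeKuttaCombination

/-- Theorem 3.2: RK discretisation commutes with forming variational equations.
If a family of RK solutions depends differentiably on a parameter `ε`, then the
slopes are also differentiable and the derivatives at `ε = 0` satisfy the RK
discretisation of the variational equations. -/
theorem stmt_6 (d s N : ℕ)
    (f : (Fin d → ℝ) → ℝ → (Fin d → ℝ))
    (Df : (Fin d → ℝ) → ℝ → ((Fin d → ℝ) →L[ℝ] (Fin d → ℝ)))
    (hf : ∀ y t, HasFDerivAt (fun z => f z t) (Df y t) y)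
    (a : Fin s → Fin s → ℝ) (b c : Fin s → ℝ)
    (t : Fin (N + 1) → ℝ)
    (x : Fin (N + 1) → ℝ → (Fin d → ℝ))
    (X k : Fin N → Fin s → ℝ → (Fin d → ℝ))
    (U : Set ℝ) (hU : U ∈ nhds (0 : ℝ))
    (hstep : ∀ ε ∈ U, ∀ n : Fin N,
      x n.succ ε = x n.castSucc ε + (t n.succ - t n.castSucc) • ∑ i, b i • k n i ε)
    (hk : ∀ ε ∈ U, ∀ (n : Fin N) (i : Fin s),
      k n i ε = f (X n i ε) (t n.castSucc + c i * (t n.succ - t n.castSucc)))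
    (hX : ∀ ε ∈ U, ∀ (n : Fin N) (i : Fin s),
      X n i ε = x n.castSucc ε + (t n.succ - t n.castSucc) • ∑ j, a i j • k n j ε)
    (δ : Fin (N + 1) → Fin d → ℝ) (Δ : Fin N → Fin s → Fin d → ℝ)
    (hx : ∀ n, HasDerivAt (x n) (δ n) 0)
    (hXder : ∀ (n : Fin N) (i : Fin s), HasDerivAt (X n i) (Δ n i) 0) :
    (∀ (n : Fin N) (i : Fin s), HasDerivAt (k n i)
        (Df (X n i 0) (t n.castSucc + c i * (t n.succ - t n.castSucc)) (Δ n i)) 0) ∧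
    (∀ n : Fin N, δ n.succ = δ n.castSucc + (t n.succ - t n.castSucc) •
        ∑ i, b i • Df (X n i 0) (t n.castSucc + c i * (t n.succ - t n.castSucc)) (Δ n i)) ∧
    (∀ (n : Fin N) (i : Fin s), Δ n i = δ n.castSucc + (t n.succ - t n.castSucc) •
        ∑ j, a i j • Df (X n j 0) (t n.castSucc + c j * (t n.succ - t n.castSucc)) (Δ n j)) := by
  have hslope : ∀ (n : Fin N) (i : Fin s), HasDerivAt (k n i)
      (Df (X n i 0) (t n.castSucc + c i * (t n.succ - t n.castSucc)) (Δ n i)) 0 :=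
    fun n i => ((hf _ _).comp_hasDerivAt 0 (hXder n i)).congr_of_eventuallyEq
      (Filter.eventually_of_mem hU fun ε hε => hk ε hε n i)
  refine ⟨hslope, fun n => ?_, fun n i => ?_⟩
  · exact (hx n.succ).eq_add_smul_sum_smul_of_eventuallyEq (hx n.castSucc) (hslope n) _ b
      (Filter.eventually_of_mem hU fun ε hε => hstep ε hε n)
  · exact (hXder n i).eq_add_smul_sum_smul_of_eventuallyEq (hx n.castSucc) (hslope n) _ (a i)
      (Filter.eventually_of_mem hU fun ε hε => hX ε hε n i)
end

section
/- Assume the RK coefficients satisfy the symplecticness conditions b_i a_{ij} + b_j a_{ji} − b_i b_j = 0 for all i, j = 1,…,s, and let h_0,…,h_{N−1} ∈ ℝ. For each n = 0,…,N−1 and i = 1,…,s let M_{n,i} be a real d × d matrix. Suppose δ_0,…,δ_N ∈ ℝ^d satisfy δ_{n+1} = δ_n + h_n Σ_{i=1}^s b_i d_{n,i} with d_{n,i} = M_{n,i} Δ_{n,i} and Δ_{n,i} = δ_n + h_n Σ_{j=1}^s a_{ij} d_{n,j}, and suppose λ_0,…,λ_N ∈ ℝ^d satisfy λ_{n+1}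 = λ_n + h_n Σ_{i=1}^s b_i ℓ_{n,i} with ℓ_{n,i} = −M_{n,i}ᵀ Λ_{n,i} and Λ_{n,i} = λ_n + h_n Σ_{j=1}^s a_{ij} ℓ_{n,j}. Then λ_nᵀ δ_n = λ_0ᵀ δ_0 for all n = 0,…,N. In particular, if δ_0 = η and λ_N = ω, then ωᵀ δ_N = λ_0ᵀ η. -/
open Matrix BigOperators

private lemma dot_sum' {d : ℕ} {ι : Type*} (t : Finset ι) (v : Fin d → ℝ)
    (w : ι → Fin d → ℝ) : v ⬝ᵥ (∑ i ∈ t, w i) = ∑ i ∈ t, v ⬝ᵥ w i := by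
  simp only [dotProduct, Finset.sum_apply, Finset.mul_sum]
  exact Finset.sum_comm

private lemma sum_dot' {d : ℕ} {ι : Type*} (t : Finset ι) (v : Fin d → ℝ)
    (w : ι → Fin d → ℝ) : (∑ i ∈ t, w i) ⬝ᵥ v = ∑ i ∈ t, w i ⬝ᵥ v := by
  simp only [dotProduct, Finset.sum_apply, Finset.sum_mul]
  exact Finset.sum_comm

private theorem step_lemma (d s : ℕ) (a : Fin s → Fin s → ℝ) (b : Fin s → ℝ)
    (hsymp : ∀ i j, b i * a i j + b j * a j i - b i * b j = 0)
    (h : ℝ) (M : Fin s → Matrix (Fin d) (Fin d) ℝ)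
    (lm dl : Fin d → ℝ) (dd Δ ell Lam : Fin s → Fin d → ℝ)
    (hdd : ∀ i, dd i = (M i).mulVec (Δ i))
    (hΔ : ∀ i, Δ i = dl + h • ∑ j, a i j • dd j)
    (hell : ∀ i, ell i = -((M i)ᵀ.mulVec (Lam i)))
    (hLam : ∀ i, Lam i = lm + h • ∑ j, a i j • ell j) :
    (lm + h • ∑ i, b i • ell i) ⬝ᵥ (dl + h • ∑ i, b i • dd i) = lm ⬝ᵥ dl := by
  have horth : ∀ i, ell i ⬝ᵥ Δ i = -(Lam i ⬝ᵥ dd i) := by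
    intro i
    rw [hell, hdd, neg_dotProduct, Matrix.mulVec_transpose,
      Matrix.dotProduct_mulVec]
  have hcross : ∀ i, ell i ⬝ᵥ dl + lm ⬝ᵥ dd i
      = - (h * ∑ j, a i j * (ell i ⬝ᵥ dd j)) - (h * ∑ j, a i j * (ell j ⬝ᵥ dd i)) := by
    intro i
    have h1 := congrArg (fun v => ell i ⬝ᵥ v) (hΔ i)
    have h2 := congrArg (fun v => v ⬝ᵥ dd i) (hLam i)
    simp only [dotProduct_add, add_dotProduct, dotProduct_smul, smul_dotProduct,
      dot_sum', sum_dot', smul_eq_mul] at h1 h2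
    linear_combination -h1 - h2 + horth i
  -- pointwise rewrite of each summand into a double sum
  have key : ∀ i, b i * (ell i ⬝ᵥ dl) + b i * (lm ⬝ᵥ dd i)
        + (h * b i) * ∑ j, b j * (ell j ⬝ᵥ dd i)
      = ∑ j, (-((h * b i) * (a i j * (ell i ⬝ᵥ dd j)))
          + -((h * b i) * (a i j * (ell j ⬝ᵥ dd i)))
          + (h * b i) * (b j * (ell j ⬝ᵥ dd i))) := by
    intro i
    rw [Finset.sum_add_distrib, Finset.sum_add_distrib]
    simp only [Finset.sum_neg_distrib, ← Finset.mul_sum]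
    linear_combination b i * hcross i
  have tot : ∑ i, (b i * (ell i ⬝ᵥ dl) + b i * (lm ⬝ᵥ dd i)
        + (h * b i) * ∑ j, b j * (ell j ⬝ᵥ dd i)) = 0 := by
    rw [Finset.sum_congr rfl (fun i _ => key i)]
    have split : ∀ i : Fin s, ∑ j, (-((h * b i) * (a i j * (ell i ⬝ᵥ dd j)))
          + -((h * b i) * (a i j * (ell j ⬝ᵥ dd i)))
          + (h * b i) * (b j * (ell j ⬝ᵥ dd i)))
        = (∑ j, -((h * b i) * (a i j * (ell i ⬝ᵥ dd j))))
          + (∑ j, -((h * b i) * (a i j * (ell j ⬝ᵥ dd i))))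
          + (∑ j, (h * b i) * (b j * (ell j ⬝ᵥ dd i))) := by
      intro i; rw [Finset.sum_add_distrib, Finset.sum_add_distrib]
    rw [Finset.sum_congr rfl (fun i _ => split i), Finset.sum_add_distrib,
      Finset.sum_add_distrib]
    have c1 : (∑ i : Fin s, ∑ j : Fin s, -((h * b i) * (a i j * (ell j ⬝ᵥ dd i))))
        = ∑ i : Fin s, ∑ j : Fin s, -((h * b j) * (a j i * (ell i ⬝ᵥ dd j))) :=
      Finset.sum_comm
    have c2 : (∑ i : Fin s, ∑ j : Fin s, (h * b i) * (b j * (ell j ⬝ᵥ dd i)))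
        = ∑ i : Fin s, ∑ j : Fin s, (h * b j) * (b i * (ell i ⬝ᵥ dd j)) :=
      Finset.sum_comm
    rw [c1, c2, ← Finset.sum_add_distrib, ← Finset.sum_add_distrib]
    refine Finset.sum_eq_zero fun i _ => ?_
    rw [← Finset.sum_add_distrib, ← Finset.sum_add_distrib]
    refine Finset.sum_eq_zero fun j _ => ?_
    linear_combination (-h * (ell i ⬝ᵥ dd j)) * hsymp i j
  rw [Finset.sum_add_distrib, Finset.sum_add_distrib] at tot
  simp only [mul_assoc] at tot
  rw [← Finset.mul_sum] at tot
  simp only [dotProduct_add, add_dotProduct, dotProduct_smul, smul_dotProduct,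
    dot_sum', sum_dot', smul_eq_mul]
  linear_combination h * tot

/-- Theorem 3.3: a symplectic RK discretisation of the variational and adjoint
systems exactly preserves the invariant `λᵀ δ`; in particular the discrete adjoint
pulls back sensitivities exactly: `ωᵀ δ_N = λ₀ᵀ η`. -/
theorem stmt_7 (d s N : ℕ)
    (a : Fin s → Fin s → ℝ) (b : Fin s → ℝ)
    (hsymp : ∀ i j, b i * a i j + b j * a j i - b i * b j = 0)
    (h : Fin N → ℝ)
    (M : Fin N → Fin s → Matrix (Fin d) (Fin d) ℝ)
    (δ lam : Fin (N + 1) → Fin d → ℝ)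
    (dd Δ ell Lam : Fin N → Fin s → Fin d → ℝ)
    (hδstep : ∀ n : Fin N, δ n.succ = δ n.castSucc + h n • ∑ i, b i • dd n i)
    (hdd : ∀ (n : Fin N) (i : Fin s), dd n i = (M n i).mulVec (Δ n i))
    (hΔ : ∀ (n : Fin N) (i : Fin s),
      Δ n i = δ n.castSucc + h n • ∑ j, a i j • dd n j)
    (hlamstep : ∀ n : Fin N, lam n.succ = lam n.castSucc + h n • ∑ i, b i • ell n i)
    (hell : ∀ (n : Fin N) (i : Fin s), ell n i = -((M n i)ᵀ.mulVec (Lam n i)))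
    (hLam : ∀ (n : Fin N) (i : Fin s),
      Lam n i = lam n.castSucc + h n • ∑ j, a i j • ell n j) :
    (∀ n, lam n ⬝ᵥ δ n = lam 0 ⬝ᵥ δ 0) ∧
      ∀ η ω : Fin d → ℝ, δ 0 = η → lam (Fin.last N) = ω →
        ω ⬝ᵥ δ (Fin.last N) = lam 0 ⬝ᵥ η := by
  have inv : ∀ n, lam n ⬝ᵥ δ n = lam 0 ⬝ᵥ δ 0 := by
    intro n
    induction n using Fin.induction with
    | zero => rfl
    | succ i ih =>
      rw [hδstep i, hlamstep i,
        step_lemma d s a b hsymp (h i) (M i) (lam i.castSucc) (δ i.castSucc)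
          (dd i) (Δ i) (ell i) (Lam i) (hdd i) (hΔ i) (hell i) (hLam i)]
      exact ih
  refine ⟨inv, fun η ω hη hω => ?_⟩
  rw [← hη, ← hω]
  exact inv (Fin.last N)
end

section
/- Assume the coefficients a_{ij}, b_i and A_{ij}, B_i satisfy the PRK symplecticness conditions b_i = B_i for all i and b_i A_{ij} + B_j a_{ji} − b_i B_j = 0 for all i, j = 1,…,s, and let h_0,…,h_{N−1} ∈ ℝ. For each n = 0,…,N−1 and i = 1,…,s let M_{n,i} be a real d × d matrix. Suppose δ_0,…,δ_N ∈ ℝ^d satisfy δ_{n+1} = δ_n + h_n Σ_{i=1}^s b_i d_{n,i} with d_{n,i} = M_{n,i} Δ_{n,i} and Δ_{n,i} = δ_n + h_n Σ_{j=1}^s a_{ij} d_{n,j}, and suppose λ_0,…,λ_N ∈ ℝ^d satisfy λ_{n+1} = λ_n + h_n Σ_{i=1}^s B_i ℓ_{n,i} with ℓ_{n,i} = −M_{n,i}ᵀ Λ_{n,i} and Λ_{n,i} = λ_n + h_n Σ_{j=1}^s A_{ij} ℓ_{n,j}. Then λ_nᵀ δ_n = λ_0ᵀ δ_0 for all n =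 0,…,N. In particular, if δ_0 = η and λ_N = ω, then ωᵀ δ_N = λ_0ᵀ η. -/
open Matrix BigOperators

/-!
The invariant is preserved step by step, for any bilinear pairing `β` under which the stage values
satisfy the discrete adjoint relation `β ℓᵢ Δᵢ = -β Λᵢ dᵢ` (for the dot product this is
`(Mᵀu)·v = u·(Mv)`). Expanding `β λₙ₊₁ δₙ₊₁` and eliminating `λₙ`, `δₙ` from the first-order terms
through the stage equations, the `O(h)` terms cancel by the adjoint relation (as `bᵢ = Bᵢ`), and
the `O(h²)` terms are `∑ᵢⱼ (bᵢ bⱼ - bⱼ Aⱼᵢ - bᵢ aᵢⱼ) β ℓᵢ dⱼ`, whose coefficients vanish by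
symplecticity.
-/

section

variable {R E F ι : Type*} [CommRing R] [AddCommGroup E] [Module R E] [AddCommGroup F]
  [Module R F] [Fintype ι]

theorem sum_sum_stage_coeffs_eq_of_symplectic {a A : ι → ι → R} {b : ι → R}
    (hsymp : ∀ i j, b i * A i j + b j * a j i - b i * b j = 0) (P : ι → ι → R) :
    ∑ i, ∑ j, (b i * A i j * P j i + b i * a i j * P i j) = ∑ i, ∑ j, b i * b j * P j i := by
  simp only [Finset.sum_add_distrib]
  rw [Finset.sum_comm (f := fun i j => b i * a i j * P i j), ← Finset.sum_add_distrib]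
  refine Finset.sum_congr rfl fun i _ => ?_
  rw [← Finset.sum_add_distrib]
  exact Finset.sum_congr rfl fun j _ => by linear_combination P j i * hsymp i j

theorem symplecticPRK_step_pairing_eq (β : E →ₗ[R] F →ₗ[R] R) {a A : ι → ι → R} {b : ι → R}
    (hsymp : ∀ i j, b i * A i j + b j * a j i - b i * b j = 0) (h : R)
    {x₀ x₁ : F} {y₀ y₁ : E} {X D : ι → F} {Y L : ι → E}
    (hx : x₁ = x₀ + h • ∑ i, b i • D i) (hX : ∀ i, X i = x₀ + h • ∑ j, a i j • D j)
    (hy : y₁ = y₀ + h • ∑ i, b i • L i) (hY : ∀ i, Y i = y₀ + h • ∑ j, A i j • L j)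
    (hadj : ∀ i, β (L i) (X i) = -β (Y i) (D i)) :
    β y₁ x₁ = β y₀ x₀ := by
  have expand : β y₁ x₁ = β y₀ x₀ + h * ∑ i, b i * (β y₀ (D i) + β (L i) x₀)
      + h ^ 2 * ∑ i, ∑ j, b i * b j * β (L j) (D i) := by
    subst hx hy
    simp only [map_add, map_sum, map_smul, LinearMap.add_apply, LinearMap.sum_apply,
      LinearMap.smul_apply, smul_eq_mul, mul_add, Finset.sum_add_distrib, Finset.mul_sum]
    ring_nf
  set P : ι → ι → R := fun i j => β (L i) (D j)
  have stage : ∀ i, β y₀ (D i) + β (L i) x₀ = -h * ∑ j, (A i j * P j i + a i j * P i j) := by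
    intro i
    have hy₀ : y₀ = Y i - h • ∑ j, A i j • L j := by rw [hY i]; abel
    have hx₀ : x₀ = X i - h • ∑ j, a i j • D j := by rw [hX i]; abel
    rw [hy₀, hx₀]
    simp only [map_sub, map_sum, map_smul, LinearMap.sub_apply, LinearMap.sum_apply,
      LinearMap.smul_apply, smul_eq_mul, Finset.sum_add_distrib]
    linear_combination hadj i
  have first_order : ∑ i, b i * (β y₀ (D i) + β (L i) x₀)
      = -h * ∑ i, ∑ j, (b i * A i j * P j i + b i * a i j * P i j) := by
    simp only [stage, Finset.mul_sum]
    exact Finset.sum_congr rfl fun i _ => Finset.sum_congr rfl fun j _ => by ring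
  rw [expand, first_order, sum_sum_stage_coeffs_eq_of_symplectic hsymp]
  ring

end

theorem neg_transpose_mulVec_dotProduct {m R : Type*} [Fintype m] [CommRing R]
    (M : Matrix m m R) (u v : m → R) : -(Mᵀ *ᵥ u) ⬝ᵥ v = -(u ⬝ᵥ M *ᵥ v) := by
  rw [neg_dotProduct, mulVec_transpose, dotProduct_mulVec]

/-- Theorem 3.4: a symplectic PRK discretisation (lower-case coefficients for the
variational equations, upper-case coefficients for the adjoint equations) exactly
preserves the invariant `λᵀ δ`. -/
theorem stmt_8 (d s N : ℕ)
    (a A : Fin s → Fin s → ℝ) (b B : Fin s → ℝ)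
    (hbB : ∀ i, b i = B i)
    (hsymp : ∀ i j, b i * A i j + B j * a j i - b i * B j = 0)
    (h : Fin N → ℝ)
    (M : Fin N → Fin s → Matrix (Fin d) (Fin d) ℝ)
    (δ lam : Fin (N + 1) → Fin d → ℝ)
    (dd Δ ell Lam : Fin N → Fin s → Fin d → ℝ)
    (hδstep : ∀ n : Fin N, δ n.succ = δ n.castSucc + h n • ∑ i, b i • dd n i)
    (hdd : ∀ (n : Fin N) (i : Fin s), dd n i = (M n i).mulVec (Δ n i))
    (hΔ : ∀ (n : Fin N) (i : Fin s),
      Δ n i = δ n.castSucc + h n • ∑ j, a i j • dd n j)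
    (hlamstep : ∀ n : Fin N, lam n.succ = lam n.castSucc + h n • ∑ i, B i • ell n i)
    (hell : ∀ (n : Fin N) (i : Fin s), ell n i = -((M n i)ᵀ.mulVec (Lam n i)))
    (hLam : ∀ (n : Fin N) (i : Fin s),
      Lam n i = lam n.castSucc + h n • ∑ j, A i j • ell n j) :
    (∀ n, lam n ⬝ᵥ δ n = lam 0 ⬝ᵥ δ 0) ∧
      ∀ η ω : Fin d → ℝ, δ 0 = η → lam (Fin.last N) = ω →
        ω ⬝ᵥ δ (Fin.last N) = lam 0 ⬝ᵥ η := by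
  obtain rfl : B = b := funext fun i => (hbB i).symm
  have step (n : Fin N) : lam n.succ ⬝ᵥ δ n.succ = lam n.castSucc ⬝ᵥ δ n.castSucc :=
    symplecticPRK_step_pairing_eq (dotProductBilin ℝ ℝ) hsymp (h n) (hδstep n) (hΔ n)
      (hlamstep n) (hLam n) fun i => by
        simp only [dotProductBilin_apply_apply, hell, hdd, neg_transpose_mulVec_dotProduct]
  have invariant (n : Fin (N + 1)) : lam n ⬝ᵥ δ n = lam 0 ⬝ᵥ δ 0 := by
    induction n using Fin.induction with
    | zero => rfl
    | succ n ih => rw [step n, ih]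
  exact ⟨invariant, by rintro η ω rfl rfl; exact invariant _⟩
end

section
/- Let d, d' ≥ 1, let Ω : ℝ^d × ℝ^{d'} → ℝ^{d'} and Ψ : ℝ^d × ℝ^{d'} → ℝ be differentiable at a point (α₀, γ₀) with Ω(α₀, γ₀) = 0, and assume the partial Jacobian matrix ∂_γ Ω(α₀, γ₀) is invertible. Let γ : ℝ^d → ℝ^{d'} be differentiable at α₀ with γ(α₀) = γ₀ and Ω(α, γ(α)) = 0 for all α in a neighbourhood of α₀, and define ψ(α) = Ψ(α, γ(α)). Then there exists a unique vector λ₀ ∈ ℝ^{d'} such that (i) ∇ψ(α₀) = ∇_α Ψ(α₀, γ₀) + (∂_α Ω(α₀, γ₀))ᵀ λ₀ and (ii) 0 = ∇_γ Ψ(α₀, γ₀) + (∂_γ Ω(α₀, γ₀))ᵀ λ₀, where ∇_α, ∇_γ denote the gradients (transposed partial Jacobians) with respect to the first and second block of variables. -/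
/-!
Differentiating the constraint `Ω(α, γ(α)) = 0` at `α₀` gives `∂_α Ω + ∂_γ Ω · γ'(α₀) = 0`, while the
chain rule gives `∇ψ(α₀) = ∇_α Ψ + γ'(α₀)ᵀ ∇_γ Ψ`. Eliminating the unknown `γ'(α₀)` through the
multiplier `λ₀ = -(∂_γ Ω)⁻ᵀ ∇_γ Ψ`, which is the unique solution of (ii), turns the second term into
`(∂_α Ω)ᵀ λ₀`.
-/

open Matrix

namespace Matrix

variable {m n p R : Type*} [Fintype m] [Fintype n]

theorem existsUnique_mulVec_eq [DecidableEq m] [CommRing R] {A : Matrix m m R} (hA : IsUnit A)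
    (c : m → R) : ∃! x, A *ᵥ x = c :=
  Function.Bijective.existsUnique
    ⟨mulVec_injective_of_isUnit hA, mulVec_surjective_iff_isUnit.2 hA⟩ c

theorem transpose_mulVec_dotProduct_eq_of_mulVec_add_mulVec_eq_zero [Fintype p] [CommRing R]
    {A : Matrix m n R} {B : Matrix m p R} {v : n → R} {w b : p → R} {l : m → R}
    (hvw : A *ᵥ v + B *ᵥ w = 0) (hl : Bᵀ *ᵥ l = -b) : Aᵀ *ᵥ l ⬝ᵥ v = b ⬝ᵥ w :=
  calc Aᵀ *ᵥ l ⬝ᵥ v = l ⬝ᵥ A *ᵥ v := by rw [mulVec_transpose, dotProduct_mulVec]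
    _ = -(l ⬝ᵥ B *ᵥ w) := by rw [eq_neg_of_add_eq_zero_left hvw, dotProduct_neg]
    _ = -(Bᵀ *ᵥ l ⬝ᵥ w) := by rw [mulVec_transpose, dotProduct_mulVec]
    _ = b ⬝ᵥ w := by rw [hl, neg_dotProduct, neg_neg]

end Matrix

namespace HasFDerivAt

variable {𝕜 E F G : Type*} [NontriviallyNormedField 𝕜]
  [NormedAddCommGroup E] [NormedSpace 𝕜 E] [NormedAddCommGroup F] [NormedSpace 𝕜 F]
  [NormedAddCommGroup G] [NormedSpace 𝕜 G]
  {f : E → F → G} {g : E → F} {L : E × F →L[𝕜] G} {g' : E →L[𝕜] F} {x : E}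

theorem comp_graph (hf : HasFDerivAt (fun p : E × F => f p.1 p.2) L (x, g x))
    (hg : HasFDerivAt g g' x) :
    HasFDerivAt (fun y => f y (g y)) (L.comp ((ContinuousLinearMap.id 𝕜 E).prod g')) x :=
  HasFDerivAt.comp (g := fun p : E × F => f p.1 p.2) x hf ((hasFDerivAt_id x).prodMk hg)

theorem comp_graph_eq_zero (hf : HasFDerivAt (fun p : E × F => f p.1 p.2) L (x, g x))
    (hg : HasFDerivAt g g' x) (hfg : ∀ᶠ y in nhds x, f y (g y) = 0) :
    L.comp ((ContinuousLinearMap.id 𝕜 E).prod g') = 0 :=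
  (hf.comp_graph hg).unique ((hasFDerivAt_const 0 x).congr_of_eventuallyEq hfg)

end HasFDerivAt

theorem stmt_10_general (d d' : ℕ)
    (Ω : (Fin d → ℝ) → (Fin d' → ℝ) → (Fin d' → ℝ))
    (Ψ : (Fin d → ℝ) → (Fin d' → ℝ) → ℝ)
    (α₀ : Fin d → ℝ) (γ₀ : Fin d' → ℝ)
    (LΩ : ((Fin d → ℝ) × (Fin d' → ℝ)) →L[ℝ] (Fin d' → ℝ))
    (DΩα : Matrix (Fin d') (Fin d) ℝ) (DΩγ : Matrix (Fin d') (Fin d') ℝ)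
    (hΩdiff : HasFDerivAt (fun p : (Fin d → ℝ) × (Fin d' → ℝ) => Ω p.1 p.2) LΩ (α₀, γ₀))
    (hLΩ : ∀ v w, LΩ (v, w) = DΩα.mulVec v + DΩγ.mulVec w)
    (LΨ : ((Fin d → ℝ) × (Fin d' → ℝ)) →L[ℝ] ℝ)
    (gΨα : Fin d → ℝ) (gΨγ : Fin d' → ℝ)
    (hΨdiff : HasFDerivAt (fun p : (Fin d → ℝ) × (Fin d' → ℝ) => Ψ p.1 p.2) LΨ (α₀, γ₀))
    (hLΨ : ∀ v w, LΨ (v, w) = gΨα ⬝ᵥ v + gΨγ ⬝ᵥ w)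
    (hinv : IsUnit DΩγ)
    (γ : (Fin d → ℝ) → (Fin d' → ℝ))
    (hγdiff : DifferentiableAt ℝ γ α₀) (hγ0 : γ α₀ = γ₀)
    (hconstr : ∀ᶠ α in nhds α₀, Ω α (γ α) = 0)
    (ψ : (Fin d → ℝ) → ℝ) (hψ : ∀ α, ψ α = Ψ α (γ α)) :
    ∃! lam₀ : Fin d' → ℝ,
      (∀ v, fderiv ℝ ψ α₀ v = (gΨα + DΩαᵀ.mulVec lam₀) ⬝ᵥ v) ∧
        gΨγ + DΩγᵀ.mulVec lam₀ = 0 := by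
  obtain ⟨Lγ, hLγ⟩ := hγdiff
  subst hγ0
  obtain rfl : ψ = fun α => Ψ α (γ α) := funext hψ
  have hconstr' : ∀ v, DΩα *ᵥ v + DΩγ *ᵥ Lγ v = 0 := fun v => by
    simpa [hLΩ] using congr($(hΩdiff.comp_graph_eq_zero hLγ hconstr) v)
  obtain ⟨lam, hlam, huniq⟩ := existsUnique_mulVec_eq ((isUnit_transpose _).2 hinv) (-gΨγ)
  refine ⟨lam, ⟨fun v => ?_, by rw [hlam, add_neg_cancel]⟩,
    fun l hl => huniq l (eq_neg_of_add_eq_zero_right hl.2)⟩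
  rw [(hΨdiff.comp_graph hLγ).fderiv, add_dotProduct,
    transpose_mulVec_dotProduct_eq_of_mulVec_add_mulVec_eq_zero (hconstr' v) hlam]
  simp [hLΨ]

/-- Lemma 3.5 (the Lagrange-multiplier lemma underlying reverse-mode automatic
differentiation): if `γ` is implicitly defined by the constraints `Ω(α, γ) = 0`
(with `∂_γ Ω` invertible at the point) and `ψ(α) = Ψ(α, γ(α))`, then there is a
unique multiplier `λ₀` with `∇ψ(α₀) = ∇_α Ψ + (∂_α Ω)ᵀ λ₀` and
`0 = ∇_γ Ψ + (∂_γ Ω)ᵀ λ₀`. -/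
theorem stmt_10 (d d' : ℕ) (hd : 1 ≤ d) (hd' : 1 ≤ d')
    (Ω : (Fin d → ℝ) → (Fin d' → ℝ) → (Fin d' → ℝ))
    (Ψ : (Fin d → ℝ) → (Fin d' → ℝ) → ℝ)
    (α₀ : Fin d → ℝ) (γ₀ : Fin d' → ℝ)
    (LΩ : ((Fin d → ℝ) × (Fin d' → ℝ)) →L[ℝ] (Fin d' → ℝ))
    (DΩα : Matrix (Fin d') (Fin d) ℝ) (DΩγ : Matrix (Fin d') (Fin d') ℝ)
    (hΩdiff : HasFDerivAt (fun p : (Fin d → ℝ) × (Fin d' → ℝ) => Ω p.1 p.2) LΩ (α₀, γ₀))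
    (hLΩ : ∀ v w, LΩ (v, w) = DΩα.mulVec v + DΩγ.mulVec w)
    (LΨ : ((Fin d → ℝ) × (Fin d' → ℝ)) →L[ℝ] ℝ)
    (gΨα : Fin d → ℝ) (gΨγ : Fin d' → ℝ)
    (hΨdiff : HasFDerivAt (fun p : (Fin d → ℝ) × (Fin d' → ℝ) => Ψ p.1 p.2) LΨ (α₀, γ₀))
    (hLΨ : ∀ v w, LΨ (v, w) = gΨα ⬝ᵥ v + gΨγ ⬝ᵥ w)
    (hΩ0 : Ω α₀ γ₀ = 0)
    (hinv : IsUnit DΩγ)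
    (γ : (Fin d → ℝ) → (Fin d' → ℝ))
    (hγdiff : DifferentiableAt ℝ γ α₀) (hγ0 : γ α₀ = γ₀)
    (hconstr : ∀ᶠ α in nhds α₀, Ω α (γ α) = 0)
    (ψ : (Fin d → ℝ) → ℝ) (hψ : ∀ α, ψ α = Ψ α (γ α)) :
    ∃! lam₀ : Fin d' → ℝ,
      (∀ v, fderiv ℝ ψ α₀ v = (gΨα + DΩαᵀ.mulVec lam₀) ⬝ᵥ v) ∧
        gΨγ + DΩγᵀ.mulVec lam₀ = 0 :=
  stmt_10_general d d' Ω Ψ α₀ γ₀ LΩ DΩα DΩγ hΩdiff hLΩ LΨ gΨα gΨγ hΨdiff hLΨ hinv γ hγdiff hγ0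
    hconstr ψ hψ
end

section
/- Fix s-stage RK coefficients a_{ij}, b_i, c_i with b_i ≠ 0 for all i, step sizes h_n ≠ 0 and times t_n (n = 0,…,N−1), a differentiable function C : ℝ^d → ℝ, and f : ℝ^d × ℝ → ℝ^d differentiable in its first argument. For fixed multipliers λ₀, λ₁, …, λ_N ∈ ℝ^d and Λ_{n,i} ∈ ℝ^d, define the Lagrangian L(α, x₀,…,x_N, (k_{n,i})) = C(x_N) − λ₀ᵀ(x₀ − α) − Σ_{n=0}^{N−1} λ_{n+1}ᵀ( x_{n+1} − x_n − h_n Σ_{i=1}^s b_i k_{n,i} ) − Σ_{n=0}^{N−1} h_n Σ_{i=1}^s b_i Λ_{n,i}ᵀ( k_{n,i} − f(X_{n,i}, t_n + c_i h_n) ), where X_{n,i} = x_n + h_n Σ_{j=1}^s a_{ij} k_{n,j}. Suppose at a given point (α, x₀,…,x_N, (k_{n,i})) the partial gradients of L with respect to x₀, x₁, …, x_N and with respect to every k_{n,i} all vanish. Then: (i) λ_N = ∇C(x_N); (ii) setting ℓ_{n,i} = −(∂_x f(X_{n,i}, t_n + c_i h_n))ᵀ Λ_{n,i}, one has λ_{n+1}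 = λ_n + h_n Σ_{i=1}^s B_i ℓ_{n,i} and Λ_{n,i} = λ_n + h_n Σ_{j=1}^s A_{ij} ℓ_{n,j} for all n and i, where A_{ij} = b_j − b_j a_{ji} / b_i and B_i = b_i; (iii) the gradient of L with respect to α equals λ₀. -/
/-!
Along a line `τ ↦ (α + τζ, x + τξ, k + τκ)` the Lagrangian differentiates to a pairing of the
perturbation `(ζ, ξ, κ)` with the multipliers. Summation by parts in `n` and swapping the two stage
sums rewrite this pairing as
`λ₀ ⬝ ζ + (∇C − λ_N) ⬝ ξ_N + ∑ₙ Rₙ ⬝ ξₙ + ∑ₙ,ᵢ hₙ Sₙᵢ ⬝ κₙᵢ`,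
where `Rₙ = 0` is the update `λ_{n+1} = λ_n + h_n ∑ b_i ℓ_{n,i}` and `Sₙᵢ = 0` is `b_i` times the
stage equation with `A_{ij} = b_j − b_j a_{ji} / b_i`. A vanishing partial gradient in `x_m` or
`k_{n,i}` isolates a single coefficient, so every residual vanishes; dividing by `h_n` and `b_i`
gives the adjoint Runge–Kutta scheme.
-/

open Matrix

theorem Function.update_self_add {ι E : Type*} [DecidableEq ι] [AddCommGroup E] (x : ι → E)
    (m : ι) (v : E) : Function.update x m (x m + v) = x + Pi.single m v := by
  rw [Pi.update_eq_sub_add_single, Pi.single_add]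
  abel

theorem fderiv_apply_eq_of_hasDerivAt_line {E : Type*} [NormedAddCommGroup E] [NormedSpace ℝ E]
    {φ : E → ℝ} {y w : E} {D : ℝ} (hφ : DifferentiableAt ℝ φ y)
    (hD : HasDerivAt (fun τ : ℝ => φ (y + τ • w)) D 0) : fderiv ℝ φ y w = D := by
  rw [← hφ.lineDeriv_eq_fderiv]
  exact HasLineDerivAt.lineDeriv hD

theorem fderiv_update_apply_eq_of_hasDerivAt_line {ι E : Type*} [Fintype ι] [DecidableEq ι]
    [NormedAddCommGroup E] [NormedSpace ℝ E] {φ : (ι → E) → ℝ} {x : ι → E} {m : ι} {w : E}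
    {D : ℝ} (hφ : DifferentiableAt ℝ φ x)
    (hD : HasDerivAt (fun τ : ℝ => φ (x + τ • (Pi.single m w : ι → E))) D 0) :
    fderiv ℝ (fun v => φ (Function.update x m v)) (x m) w = D := by
  refine fderiv_apply_eq_of_hasDerivAt_line ?_ ?_
  · refine DifferentiableAt.comp (x m) ?_ (hasFDerivAt_update x (x m)).differentiableAt
    rwa [Function.update_eq_self]
  · simpa only [Function.update_self_add, Pi.single_smul] using hD

theorem hasDerivAt_add_smul {E : Type*} [NormedAddCommGroup E] [NormedSpace ℝ E] (y v : E)
    (τ : ℝ) : HasDerivAt (fun σ : ℝ => y + σ • v) v τ := by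
  simpa using ((hasDerivAt_id τ).smul_const v).const_add y

theorem HasDerivAt.const_dotProduct {m : Type*} [Fintype m] {g : ℝ → m → ℝ} {g' : m → ℝ}
    {τ : ℝ} (w : m → ℝ) (hg : HasDerivAt g g' τ) :
    HasDerivAt (fun σ => w ⬝ᵥ g σ) (w ⬝ᵥ g') τ := by
  simp only [dotProduct]
  exact HasDerivAt.fun_sum fun j _ => (hasDerivAt_pi.1 hg j).const_mul (w j)

section DotProduct

variable {R m : Type*} [CommRing R] [Fintype m]

theorem sum_dotProduct_single_comp {ι κ : Type*} [Fintype ι] [DecidableEq κ] {e : ι → κ}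
    (he : e.Injective) (g : ι → m → R) (i : ι) (w : m → R) :
    ∑ j, g j ⬝ᵥ (Pi.single (e i) w : κ → m → R) (e j) = g i ⬝ᵥ w := by
  rw [Finset.sum_eq_single i (fun j _ hj => by simp [he.ne hj]) (by simp)]
  simp

theorem sum_sum_dotProduct_single {ι κ : Type*} [Fintype ι] [Fintype κ] [DecidableEq ι]
    [DecidableEq κ] (g : ι → κ → m → R) (i : ι) (j : κ) (w : m → R) :
    ∑ i', ∑ j', g i' j' ⬝ᵥ (Pi.single i (Pi.single j w) : ι → κ → m → R) i' j' = g i j ⬝ᵥ w := by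
  rw [Finset.sum_eq_single i (fun i' _ hi' => by simp [hi']) (by simp), Pi.single_eq_same]
  exact sum_dotProduct_single_comp Function.injective_id (g i) j w

theorem dotProduct_sum_by_parts {N : ℕ} (u v : Fin (N + 1) → m → R) :
    u 0 ⬝ᵥ v 0 + ∑ n : Fin N, u n.succ ⬝ᵥ (v n.succ - v n.castSucc)
      = u (Fin.last N) ⬝ᵥ v (Fin.last N)
        - ∑ n : Fin N, (u n.succ - u n.castSucc) ⬝ᵥ v n.castSucc := by
  have hsucc := Fin.sum_univ_succ fun i => u i ⬝ᵥ v i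
  have hcast := Fin.sum_univ_castSucc fun i => u i ⬝ᵥ v i
  simp only [dotProduct_sub, sub_dotProduct, Finset.sum_sub_distrib]
  linear_combination hcast - hsucc

end DotProduct

theorem rk_step_pairing_eq_adjoint {d s : ℕ} (a : Fin s → Fin s → ℝ) (b : Fin s → ℝ) (h : ℝ)
    (Df : Fin s → (Fin d → ℝ) →L[ℝ] (Fin d → ℝ)) (μ : Fin d → ℝ) (Λ ℓ : Fin s → Fin d → ℝ)
    (hℓ : ∀ i v, Λ i ⬝ᵥ Df i v = -(ℓ i ⬝ᵥ v)) (ξ : Fin d → ℝ) (κ : Fin s → Fin d → ℝ) :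
    μ ⬝ᵥ (h • ∑ i, b i • κ i) - h * ∑ i, b i * (Λ i ⬝ᵥ (κ i - Df i (ξ + h • ∑ j, a i j • κ j)))
      = -((h • ∑ i, b i • ℓ i) ⬝ᵥ ξ)
        + ∑ i, (h • (b i • (μ - Λ i) - h • ∑ j, (b j * a j i) • ℓ j)) ⬝ᵥ κ i := by
  simp only [dotProduct_sub, map_add, map_smul, map_sum, dotProduct_add, dotProduct_smul,
    dotProduct_sum, hℓ, smul_dotProduct, sub_dotProduct, sum_dotProduct, smul_eq_mul,
    Finset.mul_sum, Finset.sum_add_distrib, Finset.sum_sub_distrib, mul_add, mul_sub, mul_neg]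
  rw [Finset.sum_comm]
  simp only [Finset.sum_neg_distrib]
  ring_nf

section RungeKuttaLagrangian

variable {d s N : ℕ} (a : Fin s → Fin s → ℝ) (b c : Fin s → ℝ) (h t : Fin N → ℝ)
  (C : (Fin d → ℝ) → ℝ) (f : (Fin d → ℝ) → ℝ → (Fin d → ℝ))
  (lam : Fin (N + 1) → Fin d → ℝ) (Lam ell : Fin N → Fin s → Fin d → ℝ)

def rkStage (x : Fin (N + 1) → Fin d → ℝ) (k : Fin N → Fin s → Fin d → ℝ) (n : Fin N)
    (i : Fin s) : Fin d → ℝ :=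
  x n.castSucc + h n • ∑ j, a i j • k n j

def rkLagrangian (α : Fin d → ℝ) (x : Fin (N + 1) → Fin d → ℝ)
    (k : Fin N → Fin s → Fin d → ℝ) : ℝ :=
  C (x (Fin.last N)) - lam 0 ⬝ᵥ (x 0 - α)
    - ∑ n, lam n.succ ⬝ᵥ (x n.succ - x n.castSucc - h n • ∑ i, b i • k n i)
    - ∑ n, h n * ∑ i, b i * (Lam n i ⬝ᵥ (k n i - f (rkStage a h x k n i) (t n + c i * h n)))

/-- The differential of `rkLagrangian` in the direction `(ζ, ξ, κ)`, where `C'` and `Df n i` stand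
for the derivatives of `C` at `x_N` and of `f(·, t_n + c_i h_n)` at the stage `X_{n,i}`. -/
def rkLagrangianDeriv (C' : (Fin d → ℝ) →L[ℝ] ℝ)
    (Df : Fin N → Fin s → (Fin d → ℝ) →L[ℝ] (Fin d → ℝ)) (ζ : Fin d → ℝ)
    (ξ : Fin (N + 1) → Fin d → ℝ) (κ : Fin N → Fin s → Fin d → ℝ) : ℝ :=
  C' (ξ (Fin.last N)) - lam 0 ⬝ᵥ (ξ 0 - ζ)
    - ∑ n, lam n.succ ⬝ᵥ (ξ n.succ - ξ n.castSucc - h n • ∑ i, b i • κ n i)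
    - ∑ n, h n * ∑ i, b i * (Lam n i ⬝ᵥ (κ n i - Df n i (rkStage a h ξ κ n i)))

def adjointStepResidual (n : Fin N) : Fin d → ℝ :=
  lam n.succ - lam n.castSucc - h n • ∑ i, b i • ell n i

def adjointStageResidual (n : Fin N) (i : Fin s) : Fin d → ℝ :=
  b i • (lam n.succ - Lam n i) - h n • ∑ j, (b j * a j i) • ell n j

theorem rkStage_add_smul (x ξ : Fin (N + 1) → Fin d → ℝ) (k κ : Fin N → Fin s → Fin d → ℝ)
    (τ : ℝ) (n : Fin N) (i : Fin s) :
    rkStage a h (x + τ • ξ) (k + τ • κ) n i = rkStage a h x k n i + τ • rkStage a h ξ κ n i := by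
  simp only [rkStage, Pi.add_apply, Pi.smul_apply, smul_add, Finset.sum_add_distrib,
    Finset.smul_sum, smul_comm τ]
  abel

theorem differentiable_rkLagrangian (hC : Differentiable ℝ C)
    (hf : ∀ τ, Differentiable ℝ (fun z => f z τ)) :
    Differentiable ℝ (fun p : (Fin d → ℝ) × (Fin (N + 1) → Fin d → ℝ) ×
      (Fin N → Fin s → Fin d → ℝ) => rkLagrangian a b c h t C f lam Lam p.1 p.2.1 p.2.2) := by
  unfold rkLagrangian rkStage dotProduct
  fun_prop

theorem fderiv_rkLagrangian_param_apply (α : Fin d → ℝ) (x : Fin (N + 1) → Fin d → ℝ)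
    (k : Fin N → Fin s → Fin d → ℝ) (w : Fin d → ℝ) :
    fderiv ℝ (fun v => rkLagrangian a b c h t C f lam Lam v x k) α w = lam 0 ⬝ᵥ w := by
  have haffine : (fun v => rkLagrangian a b c h t C f lam Lam v x k)
      = fun v => rkLagrangian a b c h t C f lam Lam 0 x k + lam 0 ⬝ᵥ v := by
    funext v
    simp only [rkLagrangian, dotProduct_sub, sub_zero]
    ring
  rw [haffine]
  exact fderiv_apply_eq_of_hasDerivAt_line (by unfold dotProduct; fun_prop)
    (((hasDerivAt_add_smul α w 0).const_dotProduct _).const_add _)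

theorem hasDerivAt_rkLagrangian_line (C' : (Fin d → ℝ) →L[ℝ] ℝ)
    (Df : Fin N → Fin s → (Fin d → ℝ) →L[ℝ] (Fin d → ℝ)) {α : Fin d → ℝ}
    {x : Fin (N + 1) → Fin d → ℝ} {k : Fin N → Fin s → Fin d → ℝ}
    (hC : HasFDerivAt C C' (x (Fin.last N)))
    (hf : ∀ n i, HasFDerivAt (fun z => f z (t n + c i * h n)) (Df n i) (rkStage a h x k n i))
    (ζ : Fin d → ℝ) (ξ : Fin (N + 1) → Fin d → ℝ) (κ : Fin N → Fin s → Fin d → ℝ) :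
    HasDerivAt
      (fun τ : ℝ => rkLagrangian a b c h t C f lam Lam (α + τ • ζ) (x + τ • ξ) (k + τ • κ))
      (rkLagrangianDeriv a b h lam Lam C' Df ζ ξ κ) 0 := by
  simp only [rkLagrangian, rkStage_add_smul, Pi.add_apply, Pi.smul_apply]
  have line {E : Type} [NormedAddCommGroup E] [NormedSpace ℝ E] (y v : E) :=
    hasDerivAt_add_smul y v 0
  have hCline := hC.comp_hasDerivAt_of_eq (0 : ℝ) (line (x (Fin.last N)) (ξ (Fin.last N)))
    (by simp)
  have hfline (n : Fin N) (i : Fin s) : HasDerivAt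
      (fun τ : ℝ => f (rkStage a h x k n i + τ • rkStage a h ξ κ n i) (t n + c i * h n))
      (Df n i (rkStage a h ξ κ n i)) 0 :=
    (hf n i).comp_hasDerivAt_of_eq (0 : ℝ) (line _ _) (by simp)
  exact ((hCline.sub (((line _ _).sub (line _ _)).const_dotProduct _)).sub
    (HasDerivAt.fun_sum fun n _ => (((line _ _).sub (line _ _)).sub
      ((HasDerivAt.fun_sum fun i _ => (line _ _).const_smul (b i)).const_smul
        (h n))).const_dotProduct _)).sub
    (HasDerivAt.fun_sum fun n _ => (HasDerivAt.fun_sum fun i _ =>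
      (((line _ _).sub (hfline n i)).const_dotProduct _).const_mul (b i)).const_mul (h n))

theorem rkLagrangianDeriv_eq_adjoint (C' : (Fin d → ℝ) →L[ℝ] ℝ)
    (Df : Fin N → Fin s → (Fin d → ℝ) →L[ℝ] (Fin d → ℝ)) (gC : Fin d → ℝ)
    (hgC : ∀ v, C' v = gC ⬝ᵥ v) (hell : ∀ n i v, Lam n i ⬝ᵥ Df n i v = -(ell n i ⬝ᵥ v))
    (ζ : Fin d → ℝ) (ξ : Fin (N + 1) → Fin d → ℝ) (κ : Fin N → Fin s → Fin d → ℝ) :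
    rkLagrangianDeriv a b h lam Lam C' Df ζ ξ κ
      = lam 0 ⬝ᵥ ζ + (gC - lam (Fin.last N)) ⬝ᵥ ξ (Fin.last N)
        + ∑ n, adjointStepResidual b h lam ell n ⬝ᵥ ξ n.castSucc
        + ∑ n, ∑ i, (h n • adjointStageResidual a b h lam Lam ell n i) ⬝ᵥ κ n i := by
  have hparts := dotProduct_sum_by_parts lam ξ
  have hsteps := Finset.sum_congr rfl fun n (_ : n ∈ Finset.univ) =>
    rk_step_pairing_eq_adjoint a b (h n) (Df n) (lam n.succ) (Lam n) (ell n) (hell n)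
      (ξ n.castSucc) (κ n)
  simp only [rkLagrangianDeriv, rkStage, adjointStepResidual, adjointStageResidual, hgC]
  simp only [dotProduct_sub, sub_dotProduct, Finset.sum_sub_distrib, Finset.sum_add_distrib,
    Finset.sum_neg_distrib] at hsteps hparts ⊢
  linarith

theorem fderiv_rkLagrangian_update_state_apply
    (Df : (Fin d → ℝ) → ℝ → (Fin d → ℝ) →L[ℝ] (Fin d → ℝ)) (hC : Differentiable ℝ C)
    (hf : ∀ y τ, HasFDerivAt (fun z => f z τ) (Df y τ) y) (α : Fin d → ℝ)
    (x : Fin (N + 1) → Fin d → ℝ) (k : Fin N → Fin s → Fin d → ℝ) (m : Fin (N + 1))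
    (w : Fin d → ℝ) :
    fderiv ℝ (fun v => rkLagrangian a b c h t C f lam Lam α (Function.update x m v) k) (x m) w
      = rkLagrangianDeriv a b h lam Lam (fderiv ℝ C (x (Fin.last N)))
          (fun n i => Df (rkStage a h x k n i) (t n + c i * h n)) 0 (Pi.single m w) 0 := by
  have hdiff := differentiable_rkLagrangian a b c h t C f lam Lam hC
    fun τ y => (hf y τ).differentiableAt
  refine fderiv_update_apply_eq_of_hasDerivAt_line
    ((hdiff _).comp (f := fun x' => (α, x', k)) x (by fun_prop)) ?_
  simpa using hasDerivAt_rkLagrangian_line a b c h t C f lam Lam _ _ (α := α)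
    (hC _).hasFDerivAt (fun n i => hf _ _) 0 (Pi.single m w) 0

theorem fderiv_rkLagrangian_update_slope_apply
    (Df : (Fin d → ℝ) → ℝ → (Fin d → ℝ) →L[ℝ] (Fin d → ℝ)) (hC : Differentiable ℝ C)
    (hf : ∀ y τ, HasFDerivAt (fun z => f z τ) (Df y τ) y) (α : Fin d → ℝ)
    (x : Fin (N + 1) → Fin d → ℝ) (k : Fin N → Fin s → Fin d → ℝ) (n : Fin N) (i : Fin s)
    (w : Fin d → ℝ) :
    fderiv ℝ (fun v => rkLagrangian a b c h t C f lam Lam α x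
        (Function.update k n (Function.update (k n) i v))) (k n i) w
      = rkLagrangianDeriv a b h lam Lam (fderiv ℝ C (x (Fin.last N)))
          (fun n i => Df (rkStage a h x k n i) (t n + c i * h n)) 0 0
          (Pi.single n (Pi.single i w)) := by
  have hdiff := differentiable_rkLagrangian a b c h t C f lam Lam hC
    fun τ y => (hf y τ).differentiableAt
  refine fderiv_update_apply_eq_of_hasDerivAt_line
    ((hdiff _).comp (f := fun k' => (α, x, Function.update k n k')) (k n)
      ((differentiableAt_const α).prodMk ((differentiableAt_const x).prodMk
        (hasFDerivAt_update k (k n)).differentiableAt))) ?_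
  simpa [Function.update_self_add, Pi.single_smul] using
    hasDerivAt_rkLagrangian_line a b c h t C f lam Lam _ _ (α := α) (x := x)
      (hC _).hasFDerivAt (fun n i => hf _ _) 0 0 (Pi.single n (Pi.single i w))

theorem adjointResiduals_eq_zero_of_critical
    (Df : (Fin d → ℝ) → ℝ → (Fin d → ℝ) →L[ℝ] (Fin d → ℝ)) {α : Fin d → ℝ}
    {x : Fin (N + 1) → Fin d → ℝ} {k : Fin N → Fin s → Fin d → ℝ} (gC : Fin d → ℝ)
    (hC : Differentiable ℝ C) (hf : ∀ y τ, HasFDerivAt (fun z => f z τ) (Df y τ) y)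
    (hgC : ∀ v, fderiv ℝ C (x (Fin.last N)) v = gC ⬝ᵥ v)
    (hell : ∀ n i v,
      Lam n i ⬝ᵥ Df (rkStage a h x k n i) (t n + c i * h n) v = -(ell n i ⬝ᵥ v))
    (hgradx : ∀ m, fderiv ℝ
      (fun v => rkLagrangian a b c h t C f lam Lam α (Function.update x m v) k) (x m) = 0)
    (hgradk : ∀ n i, fderiv ℝ (fun v => rkLagrangian a b c h t C f lam Lam α x
      (Function.update k n (Function.update (k n) i v))) (k n i) = 0) :
    lam (Fin.last N) = gC ∧ (∀ n, adjointStepResidual b h lam ell n = 0) ∧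
      ∀ n i, h n • adjointStageResidual a b h lam Lam ell n i = 0 := by
  have hadj := rkLagrangianDeriv_eq_adjoint a b h lam Lam ell _ _ gC hgC hell
  have hx (m : Fin (N + 1)) (w : Fin d → ℝ) := (fderiv_rkLagrangian_update_state_apply
    a b c h t C f lam Lam Df hC hf α x k m w).symm.trans (DFunLike.congr_fun (hgradx m) w)
  have hk (n : Fin N) (i : Fin s) (w : Fin d → ℝ) := (fderiv_rkLagrangian_update_slope_apply
    a b c h t C f lam Lam Df hC hf α x k n i w).symm.trans (DFunLike.congr_fun (hgradk n i) w)
  refine ⟨?_, fun n => dotProduct_eq_zero _ fun w => ?_,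
    fun n i => dotProduct_eq_zero _ fun w => ?_⟩
  · refine (sub_eq_zero.1 (dotProduct_eq_zero _ fun w => ?_)).symm
    simpa [hadj, Fin.castSucc_ne_last] using hx (Fin.last N) w
  · simpa [hadj, sum_dotProduct_single_comp (Fin.castSucc_injective N)] using hx n.castSucc w
  · simpa only [hadj, _root_.zero_apply, Pi.zero_apply, dotProduct_zero, Finset.sum_const_zero,
      zero_add, sum_sum_dotProduct_single] using hk n i w

theorem adjoint_stage_eq_of_residuals_eq_zero {n : Fin N} {i : Fin s} (hb : b i ≠ 0)
    (hstep : adjointStepResidual b h lam ell n = 0)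
    (hstage : adjointStageResidual a b h lam Lam ell n i = 0) :
    Lam n i = lam n.castSucc + h n • ∑ j, (b j - b j * a j i / b i) • ell n j := by
  have hsum : ∑ j, (b j - b j * a j i / b i) • ell n j
      = ∑ j, b j • ell n j - (b i)⁻¹ • ∑ j, (b j * a j i) • ell n j := by
    simp only [sub_smul, Finset.sum_sub_distrib, Finset.smul_sum, smul_smul, div_eq_inv_mul,
      mul_comm]
  have hΛ : lam n.succ - Lam n i = (b i)⁻¹ • h n • ∑ j, (b j * a j i) • ell n j := by
    rw [eq_inv_smul_iff₀ hb]
    exact sub_eq_zero.1 hstage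
  rw [hsum]
  unfold adjointStepResidual at hstep
  linear_combination (norm := module) hstep - hΛ

end RungeKuttaLagrangian

/-- Theorem 3.6: computing `∇_α C(x_N)` for an RK discretisation via Lagrange
multipliers (reverse-mode automatic differentiation) implicitly integrates the
adjoint equations with the companion coefficients `A_{ij} = b_j − b_j a_{ji}/b_i`,
`B_i = b_i`, so that the hidden state–adjoint integrator is a symplectic PRK scheme. -/
theorem stmt_11 (d s N : ℕ)
    (a : Fin s → Fin s → ℝ) (b c : Fin s → ℝ) (hb : ∀ i, b i ≠ 0)
    (h : Fin N → ℝ) (hh : ∀ n, h n ≠ 0) (t : Fin N → ℝ)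
    (C : (Fin d → ℝ) → ℝ) (hC : Differentiable ℝ C)
    (f : (Fin d → ℝ) → ℝ → (Fin d → ℝ))
    (Df : (Fin d → ℝ) → ℝ → ((Fin d → ℝ) →L[ℝ] (Fin d → ℝ)))
    (Jf : (Fin d → ℝ) → ℝ → Matrix (Fin d) (Fin d) ℝ)
    (hf : ∀ y τ, HasFDerivAt (fun z => f z τ) (Df y τ) y)
    (hDf : ∀ y τ v, Df y τ v = (Jf y τ).mulVec v)
    -- the multipliers
    (lam : Fin (N + 1) → Fin d → ℝ) (Lam : Fin N → Fin s → Fin d → ℝ)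
    -- the Lagrangian
    (L : (Fin d → ℝ) → (Fin (N + 1) → Fin d → ℝ) → (Fin N → Fin s → Fin d → ℝ) → ℝ)
    (X : Fin N → Fin s → Fin d → ℝ)
    -- the point at which the gradients are evaluated
    (α : Fin d → ℝ) (x : Fin (N + 1) → Fin d → ℝ) (k : Fin N → Fin s → Fin d → ℝ)
    (hX : ∀ (n : Fin N) (i : Fin s),
      X n i = x n.castSucc + h n • ∑ j, a i j • k n j)
    (hL : ∀ (α' : Fin d → ℝ) (x' : Fin (N + 1) → Fin d → ℝ)
        (k' : Fin N → Fin s → Fin d → ℝ),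
      L α' x' k' =
        C (x' (Fin.last N)) - lam 0 ⬝ᵥ (x' 0 - α')
          - ∑ n : Fin N, lam n.succ ⬝ᵥ
              (x' n.succ - x' n.castSucc - h n • ∑ i, b i • k' n i)
          - ∑ n : Fin N, h n * ∑ i, b i *
              (Lam n i ⬝ᵥ (k' n i -
                f (x' n.castSucc + h n • ∑ j, a i j • k' n j) (t n + c i * h n))))
    -- the gradient of the cost at the final state
    (gC : Fin d → ℝ) (hgC : ∀ v, fderiv ℝ C (x (Fin.last N)) v = gC ⬝ᵥ v)
    -- hypothesis: all partial gradients of L with respect to x₀,…,x_N and the k_{n,i} vanish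
    (hgradx : ∀ m : Fin (N + 1),
      fderiv ℝ (fun v => L α (Function.update x m v) k) (x m) = 0)
    (hgradk : ∀ (n : Fin N) (i : Fin s),
      fderiv ℝ (fun v => L α x (Function.update k n (Function.update (k n) i v)))
        (k n i) = 0) :
    -- (i) λ_N = ∇C(x_N)
    lam (Fin.last N) = gC ∧
    -- (ii) the multipliers perform a PRK integration of the adjoint equations
    --      with the transposed-reflected coefficients A_{ij} = b_j − b_j a_{ji}/b_i, B_i = b_i
    (∀ ell : Fin N → Fin s → Fin d → ℝ,
      (∀ (n : Fin N) (i : Fin s),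
        ell n i = -((Jf (X n i) (t n + c i * h n))ᵀ.mulVec (Lam n i))) →
      (∀ n : Fin N, lam n.succ = lam n.castSucc + h n • ∑ i, b i • ell n i) ∧
      (∀ (n : Fin N) (i : Fin s),
        Lam n i = lam n.castSucc + h n • ∑ j, (b j - b j * a j i / b i) • ell n j)) ∧
    -- (iii) the gradient of L with respect to α is λ₀
    (∀ w, fderiv ℝ (fun v => L v x k) α w = lam 0 ⬝ᵥ w) := by
  have hL' : L = rkLagrangian a b c h t C f lam Lam := by
    funext α' x' k'
    exact hL α' x' k'
  have hX' : X = rkStage a h x k := by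
    funext n i
    exact hX n i
  subst hL' hX'
  have hadjoint (ell : Fin N → Fin s → Fin d → ℝ)
      (hell : ∀ n i, ell n i = -((Jf (rkStage a h x k n i) (t n + c i * h n))ᵀ *ᵥ Lam n i)) :=
    adjointResiduals_eq_zero_of_critical a b c h t C f lam Lam ell Df gC hC hf hgC
      (fun n i v => by
        rw [hDf, hell, dotProduct_mulVec, neg_dotProduct, neg_neg, mulVec_transpose])
      hgradx hgradk
  refine ⟨(hadjoint _ fun _ _ => rfl).1, fun ell hell => ?_,
    fderiv_rkLagrangian_param_apply a b c h t C f lam Lam α x k⟩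
  obtain ⟨-, hstep, hstage⟩ := hadjoint ell hell
  refine ⟨fun n => ?_, fun n i => adjoint_stage_eq_of_residuals_eq_zero a b h lam Lam ell (hb i)
    (hstep n) ((smul_eq_zero.1 (hstage n i)).resolve_left (hh n))⟩
  simpa only [adjointStepResidual, sub_sub, sub_eq_zero] using hstep n
end

section
/- Assume the coefficients a_{ij}, b_i and A_{ij}, B_i satisfy the PRK symplecticness conditions b_i = B_i for all i and b_i A_{ij} + B_j a_{ji} − b_i B_j = 0 for all i, j = 1,…,s, and let h₀,…,h_{N−1} ∈ ℝ. For each n = 0,…,N−1 and i = 1,…,s let M_{n,i} be a real d × d matrix and N_{n,i} a real d × ν matrix. Suppose δ₀,…,δ_N ∈ ℝ^d and Z_{n,i} ∈ ℝ^ν satisfy δ_{n+1} = δ_n + h_n Σ_{i=1}^s b_i d_{n,i} with d_{n,i} = M_{n,i} Δ_{n,i} + N_{n,i} Z_{n,i} and Δ_{n,i} = δ_n + h_n Σ_{j=1}^s a_{ij} d_{n,j}; suppose λ₀,…,λ_N ∈ ℝ^d satisfy λ_{n+1} = λ_n + h_n Σ_{i=1}^s B_i ℓ_{n,i} with ℓ_{n,i}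 = −M_{n,i}ᵀ Λ_{n,i} and Λ_{n,i} = λ_n + h_n Σ_{j=1}^s A_{ij} ℓ_{n,j}; and suppose the constraints N_{n,i}ᵀ Λ_{n,i} = 0 hold for all n and i. Then λ_{n+1}ᵀ δ_{n+1} = λ_nᵀ δ_n for all n = 0,…,N−1. -/
open Matrix BigOperators

lemma sum_dot'_s13 {ι m : Type*} [Fintype ι] [Fintype m] (f : ι → m → ℝ) (w : m → ℝ) :
    (∑ i, f i) ⬝ᵥ w = ∑ i, f i ⬝ᵥ w := by
  simp only [dotProduct, Finset.sum_apply, Finset.sum_mul]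
  rw [Finset.sum_comm]

lemma dot_sum'_s13 {ι m : Type*} [Fintype ι] [Fintype m] (v : m → ℝ) (f : ι → m → ℝ) :
    v ⬝ᵥ (∑ i, f i) = ∑ i, v ⬝ᵥ f i := by
  simp only [dotProduct, Finset.sum_apply, Finset.mul_sum]
  rw [Finset.sum_comm]

/-- Theorem 4.2: a symplectic PRK discretisation of the first-order optimality
system of the control problem (variations of states and controls, costates, and
the discrete optimality constraints) exactly conserves `λᵀ δ`. -/
theorem stmt_13 (d ν s N : ℕ)
    (a A : Fin s → Fin s → ℝ) (b B : Fin s → ℝ)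
    (hbB : ∀ i, b i = B i)
    (hsymp : ∀ i j, b i * A i j + B j * a j i - b i * B j = 0)
    (h : Fin N → ℝ)
    (M : Fin N → Fin s → Matrix (Fin d) (Fin d) ℝ)
    (Nm : Fin N → Fin s → Matrix (Fin d) (Fin ν) ℝ)
    (δ lam : Fin (N + 1) → Fin d → ℝ)
    (dd Δ ell Lam : Fin N → Fin s → Fin d → ℝ)
    (Z : Fin N → Fin s → Fin ν → ℝ)
    (hδstep : ∀ n : Fin N, δ n.succ = δ n.castSucc + h n • ∑ i, b i • dd n i)
    (hdd : ∀ (n : Fin N) (i : Fin s),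
      dd n i = (M n i).mulVec (Δ n i) + (Nm n i).mulVec (Z n i))
    (hΔ : ∀ (n : Fin N) (i : Fin s),
      Δ n i = δ n.castSucc + h n • ∑ j, a i j • dd n j)
    (hlamstep : ∀ n : Fin N, lam n.succ = lam n.castSucc + h n • ∑ i, B i • ell n i)
    (hell : ∀ (n : Fin N) (i : Fin s), ell n i = -((M n i)ᵀ.mulVec (Lam n i)))
    (hLam : ∀ (n : Fin N) (i : Fin s),
      Lam n i = lam n.castSucc + h n • ∑ j, A i j • ell n j)
    (hconstraint : ∀ (n : Fin N) (i : Fin s), (Nm n i)ᵀ.mulVec (Lam n i) = 0) :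
    ∀ n : Fin N, lam n.succ ⬝ᵥ δ n.succ = lam n.castSucc ⬝ᵥ δ n.castSucc := by
  intro n
  -- key pointwise identity from the constraint and the costate stage equation
  have key : ∀ i, Lam n i ⬝ᵥ dd n i + ell n i ⬝ᵥ Δ n i = 0 := by
    intro i
    rw [hdd n i, dotProduct_add, dotProduct_mulVec (A := M n i),
        dotProduct_mulVec (A := Nm n i), ← mulVec_transpose, ← mulVec_transpose,
        hconstraint, zero_dotProduct, add_zero, hell]
    simp [neg_dotProduct]
  set P : Fin s → ℝ := fun i => lam n.castSucc ⬝ᵥ dd n i with hP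
  set Q : Fin s → ℝ := fun i => ell n i ⬝ᵥ δ n.castSucc with hQ
  set L : Fin s → Fin s → ℝ := fun i j => ell n i ⬝ᵥ dd n j with hL
  have key' : ∀ i, P i + Q i
      = -(h n * ∑ j, A i j * L j i) - h n * ∑ j, a i j * L i j := by
    intro i
    have hk := key i
    rw [hLam n i, hΔ n i, add_dotProduct, dotProduct_add, smul_dotProduct,
        dotProduct_smul, sum_dot'_s13, dot_sum'_s13] at hk
    simp only [smul_dotProduct, dotProduct_smul, smul_eq_mul, hP, hQ, hL] at hk ⊢
    linarith [hk]
  have key2 : ∀ i, h n * (b i * P i) + h n * (b i * Q i)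
      = -(h n * h n * (b i * ∑ j, A i j * L j i))
        - h n * h n * (b i * ∑ j, a i j * L i j) := fun i => by
    linear_combination (h n * b i) * key' i
  have hco : ∀ i j, h n * (h n * (b i * (b j * L i j)))
      - h n * h n * (b i * (a i j * L i j))
      - h n * h n * (b j * (A j i * L i j)) = 0 := by
    intro i j
    have h1 := hsymp j i
    simp only [← hbB] at h1
    linear_combination (-(h n * h n * L i j)) * h1
  have main : (∑ i, h n * (b i * P i)) + ((∑ i, h n * (b i * Q i))
      + ∑ i, ∑ j, h n * (h n * (b i * (b j * L i j)))) = 0 := by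
    rw [← add_assoc, ← Finset.sum_add_distrib, ← Finset.sum_add_distrib]
    have e2 : ∀ i ∈ Finset.univ, h n * (b i * P i) + h n * (b i * Q i)
          + ∑ j, h n * (h n * (b i * (b j * L i j)))
        = (∑ j, (h n * (h n * (b i * (b j * L i j)))
            - h n * h n * (b i * (a i j * L i j))))
          - ∑ j, h n * h n * (b i * (A i j * L j i)) := by
      intro i _
      rw [key2 i]
      simp only [Finset.mul_sum, Finset.sum_sub_distrib]
      ring
    rw [Finset.sum_congr rfl e2, Finset.sum_sub_distrib,
        show (∑ i, ∑ j, h n * h n * (b i * (A i j * L j i)))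
          = ∑ i, ∑ j, h n * h n * (b j * (A j i * L i j)) from by rw [Finset.sum_comm],
        ← Finset.sum_sub_distrib]
    refine Finset.sum_eq_zero fun i _ => ?_
    rw [← Finset.sum_sub_distrib]
    exact Finset.sum_eq_zero fun j _ => by linear_combination hco i j
  rw [hlamstep n, hδstep n, add_dotProduct, dotProduct_add, dotProduct_add,
      smul_dotProduct, dotProduct_smul, dotProduct_smul, dot_sum'_s13, sum_dot'_s13,
      smul_dotProduct, sum_dot'_s13]
  simp only [smul_eq_mul, smul_dotProduct, dotProduct_smul, dot_sum'_s13, Finset.mul_sum, ← hbB]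
  simp only [hP, hQ, hL] at main
  linarith [main]
end

section
/- Under the hypotheses of the discrete conservation theorem for the optimality system — PRK coefficients with b_i = B_i and b_i A_{ij} + B_j a_{ji} − b_i B_j = 0 for all i, j; matrices M_{n,i} (d × d), N_{n,i} (d × ν); discrete variations δ_n, Δ_{n,i}, Z_{n,i} satisfying δ_{n+1} = δ_n + h_n Σ_i b_i d_{n,i}, d_{n,i} = M_{n,i} Δ_{n,i} + N_{n,i} Z_{n,i}, Δ_{n,i} = δ_n + h_n Σ_j a_{ij} d_{n,j}; costates λ_n, Λ_{n,i} satisfying λ_{n+1} = λ_n + h_n Σ_i B_i ℓ_{n,i}, ℓ_{n,i} = −M_{n,i}ᵀ Λ_{n,i}, Λ_{n,i} = λ_n + h_n Σ_j A_{ij} ℓ_{n,j}, and constraints N_{n,i}ᵀ Λ_{n,i} = 0 — assume in addition that δ₀ = 0 and λ_N = ω for some ω ∈ ℝ^d. Then ωᵀ δ_N = 0; in particular, taking ω = ∇C(x_N) for a differentiable cost C, every admissible discrete variation δ_N of the final state is orthogonal to ∇C(x_N), i.e. the discrete trajectory satisfies the first-order necessary condition for minimising C(x_N) subject to the discrete constraints.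 -/
/-!
The bilinear pairing `λₙᵀ δₙ` of the costate with the variation is a quadratic invariant of the
coupled linearised/adjoint system, and symplectic partitioned Runge–Kutta methods preserve such
invariants exactly: expanding one step, the first-order terms cancel stage by stage because
`Λᵀ(MΔ + NZ) = -ℓᵀΔ` when `NᵀΛ = 0`, and the second-order terms cancel by the symplecticity
condition. Hence `ωᵀ δ_N = λ_Nᵀ δ_N = λ₀ᵀ δ₀ = 0`.
-/

open Matrix

section

variable {R ι m : Type*} [CommRing R] [Fintype ι] [Fintype m]

theorem dotProduct_add_neg_transpose_mulVec_dotProduct_eq_zero {k : Type*} [Fintype k]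
    {M : Matrix m m R} {Nm : Matrix m k R} {Lam Δ : m → R} {Z : k → R}
    (hNm : Nmᵀ *ᵥ Lam = 0) :
    Lam ⬝ᵥ (M *ᵥ Δ + Nm *ᵥ Z) + (-(Mᵀ *ᵥ Lam)) ⬝ᵥ Δ = 0 := by
  rw [dotProduct_add, dotProduct_mulVec, dotProduct_mulVec, ← mulVec_transpose, ← mulVec_transpose,
    hNm, zero_dotProduct, neg_dotProduct]
  ring

def IsSymplecticPRK (a A : ι → ι → R) (b B : ι → R) : Prop :=
  (∀ i, b i = B i) ∧ ∀ i j, b i * A i j + B j * a j i - b i * B j = 0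

theorem IsSymplecticPRK.dotProduct_step {a A : ι → ι → R} {b B : ι → R}
    (hPRK : IsSymplecticPRK a A b B) {h : R} {lam δ : m → R} {Lam ell Δ dd : ι → m → R}
    (hΔ : ∀ i, Δ i = δ + h • ∑ j, a i j • dd j)
    (hLam : ∀ i, Lam i = lam + h • ∑ j, A i j • ell j)
    (hstage : ∀ i, Lam i ⬝ᵥ dd i + ell i ⬝ᵥ Δ i = 0) :
    (lam + h • ∑ i, B i • ell i) ⬝ᵥ (δ + h • ∑ i, b i • dd i) = lam ⬝ᵥ δ := by
  obtain ⟨hbB, hsymp⟩ := hPRK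
  obtain rfl : b = B := funext hbB
  set p : ι → ι → R := fun i j => ell i ⬝ᵥ dd j
  have hfirst_order : ∀ i,
      lam ⬝ᵥ dd i + ell i ⬝ᵥ δ = -(h * ∑ j, (A i j * p j i + a i j * p i j)) := by
    intro i
    rw [← sub_eq_zero, ← hstage i, hLam, hΔ]
    simp only [add_dotProduct, dotProduct_add, smul_dotProduct, dotProduct_smul, sum_dotProduct,
      dotProduct_sum, smul_eq_mul, Finset.sum_add_distrib, p]
    ring
  calc (lam + h • ∑ i, b i • ell i) ⬝ᵥ (δ + h • ∑ i, b i • dd i)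
      = lam ⬝ᵥ δ + h * (∑ i, b i * (lam ⬝ᵥ dd i + ell i ⬝ᵥ δ)
          + h * ∑ i, ∑ j, b i * b j * p j i) := by
        simp only [add_dotProduct, dotProduct_add, smul_dotProduct, dotProduct_smul, sum_dotProduct,
          dotProduct_sum, smul_eq_mul, mul_add, Finset.sum_add_distrib, Finset.mul_sum, p]
        ring_nf
    _ = lam ⬝ᵥ δ + h * h * ∑ i, ∑ j,
          ((b i * b j - b i * A i j) * p j i - b i * a i j * p i j) := by
        simp only [hfirst_order, Finset.mul_sum, mul_add, mul_sub, sub_mul, Finset.sum_add_distrib,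
          Finset.sum_sub_distrib, mul_neg, Finset.sum_neg_distrib]
        ring_nf
    _ = lam ⬝ᵥ δ + h * h * ∑ i, ∑ j, (b j * b i - b j * A j i - b i * a i j) * p i j := by
        simp only [Finset.sum_sub_distrib, sub_mul]
        rw [Finset.sum_comm (f := fun i j => b i * b j * p j i),
          Finset.sum_comm (f := fun i j => b i * A i j * p j i)]
    _ = lam ⬝ᵥ δ := by
        rw [Finset.sum_eq_zero fun i _ => Finset.sum_eq_zero fun j _ => ?_, mul_zero, add_zero]
        linear_combination (-p i j) * hsymp j i

end

/-- Theorem 4.3: under the hypotheses of the discrete conservation theorem for the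
optimality system, if additionally `δ₀ = 0` and `λ_N = ω`, then `ωᵀ δ_N = 0`:
every admissible discrete variation of the final state is orthogonal to the
gradient of the cost, i.e. symplectic discretisation commutes with the formation
of first-order necessary optimality conditions. -/
theorem stmt_14 (d ν s N : ℕ)
    (a A : Fin s → Fin s → ℝ) (b B : Fin s → ℝ)
    (hbB : ∀ i, b i = B i)
    (hsymp : ∀ i j, b i * A i j + B j * a j i - b i * B j = 0)
    (h : Fin N → ℝ)
    (M : Fin N → Fin s → Matrix (Fin d) (Fin d) ℝ)
    (Nm : Fin N → Fin s → Matrix (Fin d) (Fin ν) ℝ)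
    (δ lam : Fin (N + 1) → Fin d → ℝ)
    (dd Δ ell Lam : Fin N → Fin s → Fin d → ℝ)
    (Z : Fin N → Fin s → Fin ν → ℝ)
    (hδstep : ∀ n : Fin N, δ n.succ = δ n.castSucc + h n • ∑ i, b i • dd n i)
    (hdd : ∀ (n : Fin N) (i : Fin s),
      dd n i = (M n i).mulVec (Δ n i) + (Nm n i).mulVec (Z n i))
    (hΔ : ∀ (n : Fin N) (i : Fin s),
      Δ n i = δ n.castSucc + h n • ∑ j, a i j • dd n j)
    (hlamstep : ∀ n : Fin N, lam n.succ = lam n.castSucc + h n • ∑ i, B i • ell n i)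
    (hell : ∀ (n : Fin N) (i : Fin s), ell n i = -((M n i)ᵀ.mulVec (Lam n i)))
    (hLam : ∀ (n : Fin N) (i : Fin s),
      Lam n i = lam n.castSucc + h n • ∑ j, A i j • ell n j)
    (hconstraint : ∀ (n : Fin N) (i : Fin s), (Nm n i)ᵀ.mulVec (Lam n i) = 0)
    (ω : Fin d → ℝ)
    (hδ0 : δ 0 = 0) (hlamN : lam (Fin.last N) = ω) :
    ω ⬝ᵥ δ (Fin.last N) = 0 := by
  have hstage : ∀ n i, Lam n i ⬝ᵥ dd n i + ell n i ⬝ᵥ Δ n i = 0 := fun n i => by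
    rw [hdd, hell]
    exact dotProduct_add_neg_transpose_mulVec_dotProduct_eq_zero (hconstraint n i)
  have hstep : ∀ n : Fin N, lam n.succ ⬝ᵥ δ n.succ = lam n.castSucc ⬝ᵥ δ n.castSucc := fun n => by
    rw [hlamstep, hδstep]
    exact IsSymplecticPRK.dotProduct_step ⟨hbB, hsymp⟩ (hΔ n) (hLam n) (hstage n)
  have hconserved : ∀ k, lam k ⬝ᵥ δ k = lam 0 ⬝ᵥ δ 0 :=
    Fin.induction rfl fun n ih => (hstep n).trans ih
  rw [← hlamN, hconserved, hδ0, dotProduct_zero]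
end

section
/- Let F : ℝ^D × ℝ → ℝ^D, let I : ℝ^D × ℝ^D → ℝ be a bilinear map and let φ : ℝ^D → ℝ be such that I(F(y,t), y) + I(y, F(y,t)) = φ(y) for all y ∈ ℝ^D, t ∈ ℝ. Assume the RK coefficients satisfy b_i a_{ij} + b_j a_{ji} − b_i b_j = 0 for all i, j = 1,…,s. Let t₀ < t₁ < … < t_N with h_n = t_{n+1} − t_n, and suppose y₀,…,y_N ∈ ℝ^D, stages Y_{n,i} and slopes K_{n,i} = F(Y_{n,i}, t_n + c_i h_n) satisfy y_{n+1} = y_n + h_n Σ_{i=1}^s b_i K_{n,i} and Y_{n,i} = y_n + h_n Σ_{j=1}^s a_{ij} K_{n,j}. Then I(y_N, y_N) − I(y₀, y₀) = Σ_{n=0}^{N−1} h_n Σ_{i=1}^s b_i φ(Y_{n,i}). -/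
open Matrix BigOperators

lemma rk_step_aux {D s : ℕ}
    (I : (Fin D → ℝ) →ₗ[ℝ] (Fin D → ℝ) →ₗ[ℝ] ℝ)
    (a : Fin s → Fin s → ℝ) (b : Fin s → ℝ)
    (hsymp : ∀ i j, b i * a i j + b j * a j i - b i * b j = 0)
    (h : ℝ) (yn y' : Fin D → ℝ) (Y K : Fin s → Fin D → ℝ) (φi : Fin s → ℝ)
    (hφ : ∀ i, I (K i) (Y i) + I (Y i) (K i) = φi i)
    (hstep : y' = yn + h • ∑ i, b i • K i)
    (hY : ∀ i, Y i = yn + h • ∑ j, a i j • K j) :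
    I y' y' - I yn yn = h * ∑ i, b i * φi i := by
  subst hstep
  have hKY : ∀ i, I (K i) (Y i) = I (K i) yn + h * ∑ j, a i j * I (K i) (K j) := by
    intro i
    rw [hY i]
    simp [map_add, _root_.map_smul, map_sum, smul_eq_mul, Finset.mul_sum]
  have hYK : ∀ i, I (Y i) (K i) = I yn (K i) + h * ∑ j, a i j * I (K j) (K i) := by
    intro i
    rw [hY i]
    simp [map_add, _root_.map_smul, map_sum, LinearMap.add_apply, LinearMap.smul_apply,
      LinearMap.sum_apply, smul_eq_mul, Finset.mul_sum]
  have hrhs : h * ∑ i, b i * φi i =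
      h * ∑ i, b i * I (K i) yn + h * ∑ i, b i * I yn (K i)
        + h^2 * ∑ i, ∑ j, (b i * a i j) * (I (K i) (K j) + I (K j) (K i)) := by
    have : ∀ i, b i * φi i =
        b i * I (K i) yn + b i * I yn (K i)
          + h * ∑ j, (b i * a i j) * (I (K i) (K j) + I (K j) (K i)) := by
      intro i
      rw [← hφ i, hKY i, hYK i]
      simp only [Finset.mul_sum, mul_add, Finset.sum_add_distrib]
      ring_nf
    simp only [this, mul_add, Finset.mul_sum, Finset.sum_add_distrib]
    ring_nf
  have hlhs : I (yn + h • ∑ i, b i • K i) (yn + h • ∑ i, b i • K i) - I yn yn =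
      h * ∑ i, b i * I (K i) yn + h * ∑ i, b i * I yn (K i)
        + h^2 * ∑ i, ∑ j, (b i * b j) * I (K i) (K j) := by
    simp only [map_add, _root_.map_smul, map_sum, LinearMap.add_apply, LinearMap.smul_apply,
      LinearMap.sum_apply, smul_eq_mul, mul_add, add_mul, Finset.mul_sum, Finset.sum_add_distrib]
    ring_nf
    congr 1
    rw [Finset.sum_comm]
    exact Finset.sum_congr rfl fun i _ => Finset.sum_congr rfl fun j _ => by ring
  have key : ∑ i, ∑ j, (b i * b j) * I (K i) (K j)
      = ∑ i, ∑ j, (b i * a i j) * (I (K i) (K j) + I (K j) (K i)) := by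
    have swap : ∑ i, ∑ j, (b i * a i j) * I (K j) (K i)
        = ∑ i, ∑ j, (b j * a j i) * I (K i) (K j) := by
      rw [Finset.sum_comm]
    simp only [mul_add, Finset.sum_add_distrib, swap]
    rw [← Finset.sum_add_distrib]
    refine Finset.sum_congr rfl fun i _ => ?_
    rw [← Finset.sum_add_distrib]
    refine Finset.sum_congr rfl fun j _ => ?_
    have h2 : b i * b j = b i * a i j + b j * a j i := by linarith [hsymp i j]
    rw [h2]; ring
  rw [hrhs, hlhs, key]

lemma fin_telescope {M : Type*} [AddCommGroup M] :
    ∀ {N : ℕ} (f : Fin (N + 1) → M),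
      ∑ n : Fin N, (f n.succ - f n.castSucc) = f (Fin.last N) - f 0 := by
  intro N
  induction N with
  | zero => simp
  | succ m ih =>
    intro f
    rw [Fin.sum_univ_castSucc]
    have h1 : ∀ i : Fin m, (Fin.castSucc i).succ = Fin.castSucc i.succ := by
      intro i; ext; simp
    have h2 := ih (fun n => f n.castSucc)
    simp only [h1] at *
    rw [h2]
    simp [Fin.succ_last]

/-- Theorem 5.1 (generalised conservation for symplectic RK schemes): if
`(d/dt) I(y,y) = φ(y)` along solutions, a symplectic RK scheme reproduces the law
exactly, with the time integral of `φ` replaced by the RK quadrature based on the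
weights and the internal stages. -/
theorem stmt_16 (D s N : ℕ)
    (F : (Fin D → ℝ) → ℝ → (Fin D → ℝ))
    (I : (Fin D → ℝ) →ₗ[ℝ] (Fin D → ℝ) →ₗ[ℝ] ℝ)
    (φ : (Fin D → ℝ) → ℝ)
    (hI : ∀ y t, I (F y t) y + I y (F y t) = φ y)
    (a : Fin s → Fin s → ℝ) (b c : Fin s → ℝ)
    (hsymp : ∀ i j, b i * a i j + b j * a j i - b i * b j = 0)
    (t : Fin (N + 1) → ℝ) (ht : StrictMono t)
    (y : Fin (N + 1) → Fin D → ℝ)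
    (Y K : Fin N → Fin s → Fin D → ℝ)
    (hK : ∀ (n : Fin N) (i : Fin s),
      K n i = F (Y n i) (t n.castSucc + c i * (t n.succ - t n.castSucc)))
    (hstep : ∀ n : Fin N,
      y n.succ = y n.castSucc + (t n.succ - t n.castSucc) • ∑ i, b i • K n i)
    (hY : ∀ (n : Fin N) (i : Fin s),
      Y n i = y n.castSucc + (t n.succ - t n.castSucc) • ∑ j, a i j • K n j) :
    I (y (Fin.last N)) (y (Fin.last N)) - I (y 0) (y 0) =
      ∑ n : Fin N, (t n.succ - t n.castSucc) * ∑ i, b i * φ (Y n i) := by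
  rw [← fin_telescope (fun n => I (y n) (y n))]
  refine Finset.sum_congr rfl fun n _ => ?_
  exact rk_step_aux I a b hsymp _ _ _ _ _ _
    (fun i => by rw [hK n i]; exact hI _ _) (hstep n) (hY n)
end

section
/- Let f : ℝ^{D−d} × ℝ^d × ℝ → ℝ^{D−d}, g : ℝ^{D−d} × ℝ^d × ℝ → ℝ^d, let S : ℝ^{D−d} × ℝ^d → ℝ be a bilinear map and let φ : ℝ^{D−d} × ℝ^d → ℝ be such that S(f(q,p,t), p) + S(q, g(q,p,t)) = φ(q,p) for all q, p, t. Assume the PRK coefficients satisfy b_i = B_i for all i, b_i A_{ij} + B_j a_{ji} − b_i B_j = 0 for all i, j, and c_i = C_i for all i. Let t₀ < t₁ < … < t_N with h_n = t_{n+1} − t_n, and suppose q_n ∈ ℝ^{D−d}, p_n ∈ ℝ^d, stages Q_{n,i}, P_{n,i} and slopes k_{n,i} = f(Q_{n,i}, P_{n,i}, t_n + c_i h_n), ℓ_{n,i} = g(Q_{n,i}, P_{n,i}, t_n + C_i h_n) satisfy q_{n+1} = q_n + h_n Σ_{i=1}^s b_i k_{n,i}, p_{n+1} = p_n + h_n Σ_{i=1}^s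 B_i ℓ_{n,i}, Q_{n,i} = q_n + h_n Σ_{j=1}^s a_{ij} k_{n,j}, P_{n,i} = p_n + h_n Σ_{j=1}^s A_{ij} ℓ_{n,j}. Then S(q_N, p_N) − S(q₀, p₀) = Σ_{n=0}^{N−1} h_n Σ_{i=1}^s b_i φ(Q_{n,i}, P_{n,i}). -/
/-!
Expanding the bilinear form, one step of the scheme changes `S(q, p)` by `h` times the weighted
stage values `∑ bᵢ (S(kᵢ, p) + S(q, ℓᵢ))` plus `h² ∑ bᵢ bⱼ S(kᵢ, ℓⱼ)`. Expressing `q` and `p` through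
the internal stages `Qᵢ`, `Pᵢ` turns the quadrature `∑ bᵢ φ(Qᵢ, Pᵢ) = ∑ bᵢ (S(kᵢ, Pᵢ) + S(Qᵢ, ℓᵢ))`
into the same first-order terms plus `h ∑ (bᵢ Aᵢⱼ + bⱼ aⱼᵢ) S(kᵢ, ℓⱼ)`, and the symplecticity
condition `bᵢ Aᵢⱼ + bⱼ aⱼᵢ = bᵢ bⱼ` makes the two second-order terms agree. Summing over the steps
telescopes.
-/

theorem Fin.sum_succ_sub_castSucc {G : Type*} [AddCommGroup G] {n : ℕ} (f : Fin (n + 1) → G) :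
    ∑ i : Fin n, (f i.succ - f i.castSucc) = f (Fin.last n) - f 0 := by
  induction n with
  | zero => simp
  | succ n ih =>
    rw [Fin.sum_univ_castSucc]
    simp only [Fin.succ_castSucc]
    rw [ih (fun i => f i.castSucc), Fin.succ_last, Fin.castSucc_zero]
    abel

namespace PartitionedRK

variable {R M V ι : Type*} [CommRing R] [AddCommGroup M] [Module R M] [AddCommGroup V] [Module R V]
  [Fintype ι] (S : M →ₗ[R] V →ₗ[R] R) (h : R) (q : M) (p : V) (k : ι → M) (l : ι → V)

theorem apply_add_smul_sum_sub (x y : ι → R) :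
    S (q + h • ∑ i, x i • k i) (p + h • ∑ j, y j • l j) - S q p =
      h * ∑ i, (x i * S (k i) p + y i * S q (l i)) +
        h ^ 2 * ∑ i, ∑ j, x i * y j * S (k i) (l j) := by
  simp only [map_add, map_smul, map_sum, LinearMap.add_apply, LinearMap.smul_apply,
    LinearMap.sum_apply, smul_eq_mul, mul_add, Finset.mul_sum, Finset.sum_add_distrib]
  rw [Finset.sum_comm (γ := ι) (f := fun i j => h * (y i * (h * (x j * S (k j) (l i)))))]
  have hT : ∀ i j, h * (y j * (h * (x i * S (k i) (l j)))) = h ^ 2 * (x i * y j * S (k i) (l j)) :=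
    fun _ _ => by ring
  simp only [hT]
  ring

variable {S h q p k l} {Q : ι → M} {P : ι → V} {a A : ι → ι → R} {b : ι → R}

theorem sum_weight_mul_stages
    (hQ : ∀ i, Q i = q + h • ∑ j, a i j • k j) (hP : ∀ i, P i = p + h • ∑ j, A i j • l j) :
    ∑ i, b i * (S (k i) (P i) + S (Q i) (l i)) =
      ∑ i, (b i * S (k i) p + b i * S q (l i)) +
        h * ∑ i, ∑ j, (b i * A i j + b j * a j i) * S (k i) (l j) := by
  simp only [hQ, hP, map_add, map_smul, map_sum, LinearMap.add_apply, LinearMap.smul_apply,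
    LinearMap.sum_apply, smul_eq_mul, mul_add, add_mul, Finset.mul_sum, Finset.sum_add_distrib]
  rw [Finset.sum_comm (f := fun j i => h * (b i * a i j * S (k j) (l i)))]
  have hh : ∀ u v w : R, u * (h * (v * w)) = h * (u * v * w) := fun _ _ _ => by ring
  simp only [hh]
  ring

theorem step_sub_eq (hsymp : ∀ i j, b i * A i j + b j * a j i = b i * b j)
    (hQ : ∀ i, Q i = q + h • ∑ j, a i j • k j) (hP : ∀ i, P i = p + h • ∑ j, A i j • l j) :
    S (q + h • ∑ i, b i • k i) (p + h • ∑ j, b j • l j) - S q p =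
      h * ∑ i, b i * (S (k i) (P i) + S (Q i) (l i)) := by
  rw [apply_add_smul_sum_sub, sum_weight_mul_stages hQ hP]
  simp only [hsymp]
  ring

end PartitionedRK

theorem stmt_17_general (D d s N : ℕ)
    (f : (Fin (D - d) → ℝ) → (Fin d → ℝ) → ℝ → (Fin (D - d) → ℝ))
    (g : (Fin (D - d) → ℝ) → (Fin d → ℝ) → ℝ → (Fin d → ℝ))
    (S : (Fin (D - d) → ℝ) →ₗ[ℝ] (Fin d → ℝ) →ₗ[ℝ] ℝ)
    (φ : (Fin (D - d) → ℝ) → (Fin d → ℝ) → ℝ)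
    (hS : ∀ q p t, S (f q p t) p + S q (g q p t) = φ q p)
    (a A : Fin s → Fin s → ℝ) (b B c C : Fin s → ℝ)
    (hbB : ∀ i, b i = B i)
    (hsymp : ∀ i j, b i * A i j + B j * a j i - b i * B j = 0)
    (hcC : ∀ i, c i = C i)
    (t : Fin (N + 1) → ℝ)
    (q : Fin (N + 1) → Fin (D - d) → ℝ) (p : Fin (N + 1) → Fin d → ℝ)
    (Q k : Fin N → Fin s → Fin (D - d) → ℝ) (P l : Fin N → Fin s → Fin d → ℝ)
    (hk : ∀ (n : Fin N) (i : Fin s),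
      k n i = f (Q n i) (P n i) (t n.castSucc + c i * (t n.succ - t n.castSucc)))
    (hl : ∀ (n : Fin N) (i : Fin s),
      l n i = g (Q n i) (P n i) (t n.castSucc + C i * (t n.succ - t n.castSucc)))
    (hqstep : ∀ n : Fin N,
      q n.succ = q n.castSucc + (t n.succ - t n.castSucc) • ∑ i, b i • k n i)
    (hpstep : ∀ n : Fin N,
      p n.succ = p n.castSucc + (t n.succ - t n.castSucc) • ∑ i, B i • l n i)
    (hQ : ∀ (n : Fin N) (i : Fin s),
      Q n i = q n.castSucc + (t n.succ - t n.castSucc) • ∑ j, a i j • k n j)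
    (hP : ∀ (n : Fin N) (i : Fin s),
      P n i = p n.castSucc + (t n.succ - t n.castSucc) • ∑ j, A i j • l n j) :
    S (q (Fin.last N)) (p (Fin.last N)) - S (q 0) (p 0) =
      ∑ n : Fin N, (t n.succ - t n.castSucc) * ∑ i, b i * φ (Q n i) (P n i) := by
  obtain rfl : b = B := funext hbB
  have hstep : ∀ n : Fin N, S (q n.succ) (p n.succ) - S (q n.castSucc) (p n.castSucc) =
      (t n.succ - t n.castSucc) * ∑ i, b i * φ (Q n i) (P n i) := by
    intro n
    have hφ : ∀ i, φ (Q n i) (P n i) = S (k n i) (P n i) + S (Q n i) (l n i) := fun i => by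
      rw [hk, hl, ← hcC, hS]
    simp only [hφ, hqstep, hpstep]
    exact PartitionedRK.step_sub_eq (fun i j => sub_eq_zero.mp (hsymp i j)) (hQ n) (hP n)
  rw [← Fin.sum_succ_sub_castSucc (fun m => S (q m) (p m))]
  exact Finset.sum_congr rfl fun n _ => hstep n

/-- Theorem 5.2 (generalised conservation for symplectic PRK schemes): if
`(d/dt) S(q,p) = φ(q,p)` along solutions of the partitioned system, a symplectic
PRK scheme reproduces the law exactly, with the time integral of `φ` replaced by
the quadrature based on the weights and the internal stages. -/
theorem stmt_17 (D d s N : ℕ)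
    (f : (Fin (D - d) → ℝ) → (Fin d → ℝ) → ℝ → (Fin (D - d) → ℝ))
    (g : (Fin (D - d) → ℝ) → (Fin d → ℝ) → ℝ → (Fin d → ℝ))
    (S : (Fin (D - d) → ℝ) →ₗ[ℝ] (Fin d → ℝ) →ₗ[ℝ] ℝ)
    (φ : (Fin (D - d) → ℝ) → (Fin d → ℝ) → ℝ)
    (hS : ∀ q p t, S (f q p t) p + S q (g q p t) = φ q p)
    (a A : Fin s → Fin s → ℝ) (b B c C : Fin s → ℝ)
    (hbB : ∀ i, b i = B i)
    (hsymp : ∀ i j, b i * A i j + B j * a j i - b i * B j = 0)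
    (hcC : ∀ i, c i = C i)
    (t : Fin (N + 1) → ℝ) (ht : StrictMono t)
    (q : Fin (N + 1) → Fin (D - d) → ℝ) (p : Fin (N + 1) → Fin d → ℝ)
    (Q k : Fin N → Fin s → Fin (D - d) → ℝ) (P l : Fin N → Fin s → Fin d → ℝ)
    (hk : ∀ (n : Fin N) (i : Fin s),
      k n i = f (Q n i) (P n i) (t n.castSucc + c i * (t n.succ - t n.castSucc)))
    (hl : ∀ (n : Fin N) (i : Fin s),
      l n i = g (Q n i) (P n i) (t n.castSucc + C i * (t n.succ - t n.castSucc)))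
    (hqstep : ∀ n : Fin N,
      q n.succ = q n.castSucc + (t n.succ - t n.castSucc) • ∑ i, b i • k n i)
    (hpstep : ∀ n : Fin N,
      p n.succ = p n.castSucc + (t n.succ - t n.castSucc) • ∑ i, B i • l n i)
    (hQ : ∀ (n : Fin N) (i : Fin s),
      Q n i = q n.castSucc + (t n.succ - t n.castSucc) • ∑ j, a i j • k n j)
    (hP : ∀ (n : Fin N) (i : Fin s),
      P n i = p n.castSucc + (t n.succ - t n.castSucc) • ∑ j, A i j • l n j) :
    S (q (Fin.last N)) (p (Fin.last N)) - S (q 0) (p 0) =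
      ∑ n : Fin N, (t n.succ - t n.castSucc) * ∑ i, b i * φ (Q n i) (P n i) :=
  stmt_17_general D d s N f g S φ hS a A b B c C hbB hsymp hcC t q p Q k P l hk hl hqstep hpstep hQ
    hP
end

section
/- Let U ⊆ ℝ^ν and for u ∈ U let N_U(u) = { w ∈ ℝ^ν : wᵀ(v − u) ≤ 0 for all v ∈ U } be the normal cone to U at u. Assume the PRK coefficients satisfy b_i = B_i ≥ 0 for all i and b_i A_{ij} + B_j a_{ji} − b_i B_j = 0 for all i, j = 1,…,s, and let h₀,…,h_{N−1} ≥ 0. For each n, i let M_{n,i} be a real d × d matrix, N_{n,i} a real d × ν matrix, and U_{n,i} ∈ U. Suppose δ₀,…,δ_N ∈ ℝ^d and Z_{n,i} ∈ ℝ^ν satisfy δ_{n+1} = δ_n + h_n Σ_{i=1}^s b_i d_{n,i} with d_{n,i} = M_{n,i} Δ_{n,i} + N_{n,i} Z_{n,i} and Δ_{n,i} = δ_n + h_n Σ_{j=1}^s a_{ij} d_{n,j}, where each Z_{n,i} = V_{n,i} − U_{n,i} for some V_{n,i} ∈ U; suppose λ₀,…,λ_N ∈ ℝ^d satisfy λ_{n+1}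 = λ_n + h_n Σ_{i=1}^s B_i ℓ_{n,i} with ℓ_{n,i} = −M_{n,i}ᵀ Λ_{n,i} and Λ_{n,i} = λ_n + h_n Σ_{j=1}^s A_{ij} ℓ_{n,j}; and suppose −N_{n,i}ᵀ Λ_{n,i} ∈ N_U(U_{n,i}) for all n and i. Then λ_{n+1}ᵀ δ_{n+1} ≥ λ_nᵀ δ_n for all n; in particular, if δ₀ = 0 and λ_N = ω, then ωᵀ δ_N ≥ 0. -/
open Matrix BigOperators

private lemma dot_sum {d s : ℕ} (v : Fin d → ℝ) (f : Fin s → Fin d → ℝ) :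
    v ⬝ᵥ (∑ i, f i) = ∑ i, v ⬝ᵥ f i := by
  simp only [dotProduct, Finset.sum_apply, Finset.mul_sum]
  rw [Finset.sum_comm]

private lemma sum_dot {d s : ℕ} (v : Fin d → ℝ) (f : Fin s → Fin d → ℝ) :
    (∑ i, f i) ⬝ᵥ v = ∑ i, f i ⬝ᵥ v := by
  simp only [dotProduct, Finset.sum_apply, Finset.sum_mul]
  rw [Finset.sum_comm]

private lemma scalar_key (s : ℕ) (a A : Fin s → Fin s → ℝ) (B : Fin s → ℝ)
    (hsymp : ∀ i j, B i * A i j + B j * a j i - B i * B j = 0)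
    (h : ℝ) (e : Fin s → Fin s → ℝ) (p q : Fin s → ℝ) :
    h * (∑ i, B i * q i) + h * (∑ i, B i * p i)
      + h * h * (∑ i, ∑ j, B i * B j * e i j)
      = h * ∑ i, B i * ((p i + h * ∑ j, A i j * e j i)
          + (q i + h * ∑ j, a i j * e i j)) := by
  have inner : ∀ i, (∑ j, (B i * (A i j * e j i) + B i * (a i j * e i j)))
      = B i * (∑ j, A i j * e j i) + B i * (∑ j, a i j * e i j) := by
    intro i
    rw [Finset.sum_add_distrib, Finset.mul_sum, Finset.mul_sum]
  have hdouble : (∑ i, ∑ j, B i * B j * e i j)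
      = ∑ i, (∑ j, (B i * (A i j * e j i) + B i * (a i j * e i j))) := by
    have h1 : (∑ i, ∑ j, (B i * (A i j * e j i))) = ∑ i, ∑ j, (B j * (A j i * e i j)) :=
      Finset.sum_comm
    calc (∑ i, ∑ j, B i * B j * e i j)
        = ∑ i, ∑ j, (B j * (A j i * e i j) + B i * (a i j * e i j)) := by
          refine Finset.sum_congr rfl fun i _ => Finset.sum_congr rfl fun j _ => ?_
          linear_combination (-(e i j)) * hsymp j i
      _ = (∑ i, ∑ j, (B j * (A j i * e i j))) + ∑ i, ∑ j, (B i * (a i j * e i j)) := by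
          simp [Finset.sum_add_distrib]
      _ = (∑ i, ∑ j, (B i * (A i j * e j i))) + ∑ i, ∑ j, (B i * (a i j * e i j)) := by
          rw [h1]
      _ = ∑ i, (∑ j, (B i * (A i j * e j i) + B i * (a i j * e i j))) := by
          simp [Finset.sum_add_distrib]
  calc h * (∑ i, B i * q i) + h * (∑ i, B i * p i)
        + h * h * (∑ i, ∑ j, B i * B j * e i j)
      = h * (∑ i, B i * q i) + h * (∑ i, B i * p i)
        + h * h * (∑ i, (B i * (∑ j, A i j * e j i) + B i * (∑ j, a i j * e i j))) := by
        rw [hdouble]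
        congr 1
        exact congrArg _ (Finset.sum_congr rfl fun i _ => inner i)
    _ = ∑ i, (h * (B i * q i) + h * (B i * p i)
        + h * h * (B i * (∑ j, A i j * e j i) + B i * (∑ j, a i j * e i j))) := by
        rw [Finset.mul_sum, Finset.mul_sum, Finset.mul_sum,
          ← Finset.sum_add_distrib, ← Finset.sum_add_distrib]
    _ = ∑ i, h * (B i * ((p i + h * ∑ j, A i j * e j i)
          + (q i + h * ∑ j, a i j * e i j))) :=
        Finset.sum_congr rfl fun i _ => by ring
    _ = h * ∑ i, B i * ((p i + h * ∑ j, A i j * e j i)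
          + (q i + h * ∑ j, a i j * e i j)) := by
        rw [Finset.mul_sum]

/-- The constrained-controls result of Section 4.3: for a symplectic PRK scheme with
nonnegative weights and nonnegative step sizes, if the control variations are
admissible (`Z_{n,i} = V_{n,i} − U_{n,i}` with `V_{n,i} ∈ U`) and the costates obey
the normal-cone condition `−N_{n,i}ᵀ Λ_{n,i} ∈ N_U(U_{n,i})`, then `λᵀδ` is
nondecreasing along the discrete trajectory; in particular if `δ₀ = 0` and
`λ_N = ω`, then `ωᵀ δ_N ≥ 0`. -/
theorem stmt_18 (d ν s N : ℕ) (U : Set (Fin ν → ℝ))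
    (a A : Fin s → Fin s → ℝ) (b B : Fin s → ℝ)
    (hbB : ∀ i, b i = B i) (hbnonneg : ∀ i, 0 ≤ b i)
    (hsymp : ∀ i j, b i * A i j + B j * a j i - b i * B j = 0)
    (h : Fin N → ℝ) (hhnonneg : ∀ n, 0 ≤ h n)
    (M : Fin N → Fin s → Matrix (Fin d) (Fin d) ℝ)
    (Nm : Fin N → Fin s → Matrix (Fin d) (Fin ν) ℝ)
    (Uc : Fin N → Fin s → Fin ν → ℝ) (hUc : ∀ (n : Fin N) (i : Fin s), Uc n i ∈ U)
    (δ lam : Fin (N + 1) → Fin d → ℝ)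
    (dd Δ ell Lam : Fin N → Fin s → Fin d → ℝ)
    (Z : Fin N → Fin s → Fin ν → ℝ)
    (hZ : ∀ (n : Fin N) (i : Fin s), ∃ V ∈ U, Z n i = V - Uc n i)
    (hδstep : ∀ n : Fin N, δ n.succ = δ n.castSucc + h n • ∑ i, b i • dd n i)
    (hdd : ∀ (n : Fin N) (i : Fin s),
      dd n i = (M n i).mulVec (Δ n i) + (Nm n i).mulVec (Z n i))
    (hΔ : ∀ (n : Fin N) (i : Fin s),
      Δ n i = δ n.castSucc + h n • ∑ j, a i j • dd n j)
    (hlamstep : ∀ n : Fin N, lam n.succ = lam n.castSucc + h n • ∑ i, B i • ell n i)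
    (hell : ∀ (n : Fin N) (i : Fin s), ell n i = -((M n i)ᵀ.mulVec (Lam n i)))
    (hLam : ∀ (n : Fin N) (i : Fin s),
      Lam n i = lam n.castSucc + h n • ∑ j, A i j • ell n j)
    -- the normal-cone condition  −N_{n,i}ᵀ Λ_{n,i} ∈ N_U(U_{n,i})
    (hcone : ∀ (n : Fin N) (i : Fin s), ∀ v ∈ U,
      (-((Nm n i)ᵀ.mulVec (Lam n i))) ⬝ᵥ (v - Uc n i) ≤ 0) :
    (∀ n : Fin N, lam n.castSucc ⬝ᵥ δ n.castSucc ≤ lam n.succ ⬝ᵥ δ n.succ) ∧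
      ∀ ω : Fin d → ℝ, δ 0 = 0 → lam (Fin.last N) = ω →
        0 ≤ ω ⬝ᵥ δ (Fin.last N) := by
  have hbB' : b = B := funext hbB
  subst hbB'
  have key : ∀ n : Fin N, lam n.castSucc ⬝ᵥ δ n.castSucc ≤ lam n.succ ⬝ᵥ δ n.succ := by
    intro n
    have e1 : lam n.succ ⬝ᵥ δ n.succ
        = lam n.castSucc ⬝ᵥ δ n.castSucc
          + (h n * (∑ i, b i * (ell n i ⬝ᵥ δ n.castSucc))
            + h n * (∑ i, b i * (lam n.castSucc ⬝ᵥ dd n i))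
            + h n * h n * (∑ i, ∑ j, b i * b j * (ell n i ⬝ᵥ dd n j))) := by
      rw [hlamstep, hδstep, add_dotProduct, dotProduct_add, dotProduct_add,
        smul_dotProduct, dotProduct_smul, smul_dotProduct, dot_sum, sum_dot, sum_dot]
      simp only [smul_dotProduct, dotProduct_smul, smul_eq_mul, dot_sum,
        Finset.mul_sum]
      ring_nf
      try rfl
    have e2 : ∀ i, Lam n i ⬝ᵥ dd n i + ell n i ⬝ᵥ Δ n i
        = (lam n.castSucc ⬝ᵥ dd n i
            + h n * ∑ j, A i j * (ell n j ⬝ᵥ dd n i))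
          + (ell n i ⬝ᵥ δ n.castSucc
            + h n * ∑ j, a i j * (ell n i ⬝ᵥ dd n j)) := by
      intro i
      rw [hLam n i, hΔ n i, add_dotProduct, dotProduct_add, smul_dotProduct,
        dotProduct_smul, sum_dot, dot_sum]
      simp only [smul_dotProduct, dotProduct_smul, smul_eq_mul, Finset.mul_sum]
      try ring
    have key3 : h n * (∑ i, b i * (ell n i ⬝ᵥ δ n.castSucc))
          + h n * (∑ i, b i * (lam n.castSucc ⬝ᵥ dd n i))
          + h n * h n * (∑ i, ∑ j, b i * b j * (ell n i ⬝ᵥ dd n j))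
        = h n * ∑ i, b i * ((lam n.castSucc ⬝ᵥ dd n i
              + h n * ∑ j, A i j * (ell n j ⬝ᵥ dd n i))
            + (ell n i ⬝ᵥ δ n.castSucc
              + h n * ∑ j, a i j * (ell n i ⬝ᵥ dd n j))) :=
      scalar_key s a A b hsymp (h n) _ _ _
    have expand : lam n.succ ⬝ᵥ δ n.succ
        = lam n.castSucc ⬝ᵥ δ n.castSucc
          + h n * ∑ i, b i * (Lam n i ⬝ᵥ dd n i + ell n i ⬝ᵥ Δ n i) := by
      rw [e1, key3]
      congr 1
      exact congrArg _ (Finset.sum_congr rfl fun i _ => by rw [e2 i])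
    rw [expand]
    have pos : ∀ i ∈ Finset.univ, (0:ℝ) ≤ b i * (Lam n i ⬝ᵥ dd n i + ell n i ⬝ᵥ Δ n i) := by
      intro i _
      have h1 : Lam n i ⬝ᵥ dd n i + ell n i ⬝ᵥ Δ n i
          = ((Nm n i)ᵀ.mulVec (Lam n i)) ⬝ᵥ Z n i := by
        rw [hdd n i, hell n i, dotProduct_add, neg_dotProduct,
          mulVec_transpose, mulVec_transpose, dotProduct_mulVec, dotProduct_mulVec]
        ring
      obtain ⟨V, hV, hZV⟩ := hZ n i
      have hc := hcone n i V hV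
      rw [neg_dotProduct, neg_nonpos] at hc
      rw [h1, hZV]
      exact mul_nonneg (hbnonneg i) hc
    have hs := Finset.sum_nonneg pos
    nlinarith [mul_nonneg (hhnonneg n) hs]
  refine ⟨key, fun ω hδ0 hlamN => ?_⟩
  have mono : ∀ k : Fin (N + 1), lam 0 ⬝ᵥ δ 0 ≤ lam k ⬝ᵥ δ k := by
    intro k
    induction k using Fin.induction with
    | zero => exact le_refl _
    | succ i ih => exact le_trans ih (key i)
  have hlast := mono (Fin.last N)
  rw [hδ0, hlamN] at hlast
  simpa using hlast
end
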